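/- arXiv:2309.13764 — 7 statements merged into one kernel-verified Lean document; each statement's English description precedes it below -/
import Mathlib

section
/- Let n ≥ 2, ω a primitive n-th root of unity, and J ⊆ {1,…,n−1}. Let A = ℂ[z_1,…,z_{n−1}] with the scaling action of Ĥ = (μ_n)^{n−1}. Let H = {(ω^{a_r}) : Σ r·a_r ≡ 0 mod n} and H_J = {(ω^{a_r}) ∈ H : a_j ≡ 0 mod n for all j ∈ J}. Fix integers c_j ∈ {0,…,n−1} for j ∈ J and a subset K disjoint from J, and let I be the ideal of A generated by {z_j − ω^{c_j} : j ∈ J} ∪ {z_k : k ∈ K}. Then A^{H_J} = A^H + I^{H_J}, where I^{H_J} = I ∩ A^{H_J}. -/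
open MvPolynomial

/-- The rescaling automorphism of `ℂ[z_1, …, z_{n-1}]` sending `z_i ↦ ω^{a_i} z_i`. -/
noncomputable def rescale3 (n : ℕ) (ω : ℂ) (a : Fin (n - 1) → ℤ) :
    MvPolynomial (Fin (n - 1)) ℂ →ₐ[ℂ] MvPolynomial (Fin (n - 1)) ℂ :=
  aeval (fun i => (ω ^ a i) • (X i : MvPolynomial (Fin (n - 1)) ℂ))

/-- Exponent tuples defining elements of `H`: `Σ r·a_r ≡ 0 mod n`
(variable `i : Fin (n-1)` corresponds to the index `r = i + 1`). -/
def Hcond (n : ℕ) (a : Fin (n - 1) → ℤ) : Prop :=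
  (n : ℤ) ∣ ∑ i : Fin (n - 1), (((i : ℕ) : ℤ) + 1) * a i

/-- Exponent tuples defining elements of `H_J`: in `H` and `a_j ≡ 0 mod n` for `j ∈ J`. -/
def HJcond (n : ℕ) (J : Finset (Fin (n - 1))) (a : Fin (n - 1) → ℤ) : Prop :=
  Hcond n a ∧ ∀ j ∈ J, (n : ℤ) ∣ a j

/-- `H`-invariance of a polynomial. -/
def invH (n : ℕ) (ω : ℂ) (p : MvPolynomial (Fin (n - 1)) ℂ) : Prop :=
  ∀ a : Fin (n - 1) → ℤ, Hcond n a → rescale3 n ω a p = p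

/-- `H_J`-invariance of a polynomial. -/
def invHJ (n : ℕ) (ω : ℂ) (J : Finset (Fin (n - 1))) (p : MvPolynomial (Fin (n - 1)) ℂ) :
    Prop :=
  ∀ a : Fin (n - 1) → ℤ, HJcond n J a → rescale3 n ω a p = p

/-- The ideal `I = ⟨z_j − ω^{c_j} (j ∈ J), z_k (k ∈ K)⟩`. -/
noncomputable def idealI (n : ℕ) (ω : ℂ) (J K : Finset (Fin (n - 1)))
    (c : Fin (n - 1) → ℕ) : Ideal (MvPolynomial (Fin (n - 1)) ℂ) :=
  Ideal.span ((fun j => (X j : MvPolynomial (Fin (n - 1)) ℂ) - C (ω ^ c j)) '' (J : Set _)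
    ∪ (fun k => (X k : MvPolynomial (Fin (n - 1)) ℂ)) '' (K : Set _))

/-!
A monomial `z^b` is `H_J`-invariant iff `∑ a_i b_i ≡ 0 mod n` for every `a` defining an element
of `H_J`; by duality this forces `b_i ≡ k·i mod n` for `i ∉ J`, for a single `k`. Changing the
exponents `b_j`, `j ∈ J`, to residues of `k·j` gives an `H`-invariant monomial, and since
`z_j ≡ ω^{c_j}` modulo `I`, the original monomial is congruent modulo `I` to a scalar multiple of
it. The difference is `H_J`-invariant because both terms are.
-/

lemma zpow_sum₀ {ι G₀ : Type*} [CommGroupWithZero G₀] {a : G₀} (ha : a ≠ 0) (s : Finset ι)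
    (f : ι → ℤ) : a ^ (∑ i ∈ s, f i) = ∏ i ∈ s, a ^ f i := by
  classical
  induction s using Finset.induction with
  | empty => simp
  | insert i s hi ih => rw [Finset.sum_insert hi, Finset.prod_insert hi, zpow_add₀ ha, ih]

/- Test `h` against `(n / g) • v` and `(r i / g) • v - Pi.single i 1`, where
`g = gcd (gcd r) n = ∑ v i * r i + n * t` (Bézout); both are orthogonal to `r` modulo `n`. -/
lemma exists_dvd_sub_mul_of_forall_dvd {ι : Type*} [DecidableEq ι] {n : ℤ} (hn : n ≠ 0)
    (S : Finset ι) (r b : ι → ℤ)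
    (h : ∀ a : ι → ℤ, n ∣ ∑ i ∈ S, a i * r i → n ∣ ∑ i ∈ S, a i * b i) :
    ∃ k : ℤ, ∀ i ∈ S, n ∣ b i - k * r i := by
  obtain ⟨w, hw⟩ := S.gcd_eq_sum_mul r
  set g : ℤ := ((S.gcd r).gcd n : ℤ)
  set v : ι → ℤ := fun i => (S.gcd r).gcdA n * w i
  set t : ℤ := (S.gcd r).gcdB n
  have hv : ∑ i ∈ S, v i * r i = g - n * t := by
    have hbez : g = S.gcd r * (S.gcd r).gcdA n + n * t := Int.gcd_eq_gcd_ab _ _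
    calc ∑ i ∈ S, v i * r i = (∑ i ∈ S, r i * w i) * (S.gcd r).gcdA n := by
          rw [Finset.sum_mul]; exact Finset.sum_congr rfl fun i _ => by ring
      _ = g - n * t := by rw [← hw, hbez]; ring
  have hgr : ∀ i ∈ S, g ∣ r i := fun i hi => (Int.gcd_dvd_left _ _).trans (Finset.gcd_dvd hi)
  obtain ⟨e, he⟩ : g ∣ n := Int.gcd_dvd_right _ _
  have he0 : e ≠ 0 := right_ne_zero_of_mul (he ▸ hn)
  obtain ⟨k, hk⟩ : g ∣ ∑ i ∈ S, v i * b i := by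
    have hmul : ∀ f : ι → ℤ, ∑ i ∈ S, e * v i * f i = e * ∑ i ∈ S, v i * f i := fun f => by
      rw [Finset.mul_sum]; exact Finset.sum_congr rfl fun i _ => by ring
    have := h (fun i => e * v i) (by rw [hmul, hv]; exact ⟨1 - e * t, by rw [he]; ring⟩)
    rwa [hmul, he, mul_comm g, mul_dvd_mul_iff_left he0] at this
  refine ⟨k, fun i hi => ?_⟩
  obtain ⟨q, hq⟩ := hgr i hi
  have hsum : ∀ f : ι → ℤ, ∑ j ∈ S, (q * v j - (Pi.single i 1 : ι → ℤ) j) * f j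
      = q * ∑ j ∈ S, v j * f j - f i := fun f => by
    simp [sub_mul, Finset.sum_sub_distrib, Finset.mul_sum, Pi.single_apply, hi, mul_assoc]
  have := h (fun j => q * v j - (Pi.single i 1 : ι → ℤ) j)
    (by rw [hsum, hv, hq]; exact ⟨-(q * t), by ring⟩)
  rw [hsum, hk] at this
  have hneg : b i - k * r i = -(q * (g * k) - b i) := by rw [hq]; ring
  rw [hneg]
  exact dvd_neg.mpr this

lemma exists_eq_on_compl_forall_dvd_sub {σ : Type*} [Fintype σ] {n : ℤ} (hn : n ≠ 0)
    (J : Finset σ) (b : σ →₀ ℕ) (e : σ → ℤ) (hb : ∀ i ∉ J, n ∣ b i - e i) :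
    ∃ b' : σ →₀ ℕ, (∀ i ∉ J, b' i = b i) ∧ ∀ i, n ∣ b' i - e i := by
  classical
  refine ⟨Finsupp.equivFunOnFinite.symm fun i => if i ∈ J then (e i % n).toNat else b i,
    fun i hi => by simp [hi], fun i => ?_⟩
  by_cases hi : i ∈ J
  · rw [Finsupp.coe_equivFunOnFinite_symm, if_pos hi, Int.toNat_of_nonneg (Int.emod_nonneg _ hn),
      Int.emod_def]
    exact ⟨-(e i / n), by ring⟩
  · simpa [hi] using hb i hi

section Quotient

variable {R σ : Type*} [CommRing R] [Fintype σ] [DecidableEq σ] {I : Ideal (MvPolynomial σ R)}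
  {J : Finset σ} {t : σ → R}

lemma mk_monomial_eq_of_X_sub_C_mem (hI : ∀ j ∈ J, X j - C (t j) ∈ I) (b : σ →₀ ℕ) (x : R) :
    Ideal.Quotient.mk I (monomial b x)
      = Ideal.Quotient.mk I (C (x * ∏ j ∈ J, t j ^ b j) * ∏ i ∈ Jᶜ, X i ^ b i) := by
  have hX : ∀ j ∈ J, Ideal.Quotient.mk I (X j) = Ideal.Quotient.mk I (C (t j)) :=
    fun j hj => Ideal.Quotient.eq.mpr (hI j hj)
  rw [monomial_eq, Finsupp.prod_fintype _ _ (fun _ => pow_zero _), ← Finset.prod_mul_prod_compl J]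
  simp only [map_mul, map_prod, map_pow]
  rw [Finset.prod_congr rfl fun j hj => congrArg (· ^ b j) (hX j hj)]
  ring

lemma monomial_sub_monomial_mem_of_X_sub_C_mem (hI : ∀ j ∈ J, X j - C (t j) ∈ I)
    {b b' : σ →₀ ℕ} (hbb' : ∀ i ∉ J, b i = b' i) {x y : R}
    (hxy : x * ∏ j ∈ J, t j ^ b j = y * ∏ j ∈ J, t j ^ b' j) :
    monomial b x - monomial b' y ∈ I := by
  have hrest : ∏ i ∈ Jᶜ, (X i : MvPolynomial σ R) ^ b i = ∏ i ∈ Jᶜ, X i ^ b' i :=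
    Finset.prod_congr rfl fun i hi => by rw [hbb' i (Finset.mem_compl.mp hi)]
  rw [← Ideal.Quotient.eq, mk_monomial_eq_of_X_sub_C_mem hI, mk_monomial_eq_of_X_sub_C_mem hI, hxy,
    hrest]

end Quotient

section Rescale

variable {n : ℕ} {ω : ℂ}

lemma rescale3_monomial (hω0 : ω ≠ 0) (a : Fin (n - 1) → ℤ) (b : Fin (n - 1) →₀ ℕ) (x : ℂ) :
    rescale3 n ω a (monomial b x) = ω ^ (∑ i, a i * b i) • monomial b x := by
  have hprod : ∏ i, (ω ^ a i) ^ b i = ω ^ (∑ i, a i * b i) := by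
    rw [zpow_sum₀ hω0]
    exact Finset.prod_congr rfl fun i _ => by rw [zpow_mul, zpow_natCast]
  rw [rescale3, aeval_monomial, algebraMap_eq, monomial_eq, ← hprod,
    Finsupp.prod_fintype _ _ (fun _ => pow_zero _), Finsupp.prod_fintype _ _ (fun _ => pow_zero _)]
  simp only [smul_eq_C_mul, mul_pow, Finset.prod_mul_distrib, ← map_pow, ← map_prod]
  ring

lemma coeff_rescale3 (hω0 : ω ≠ 0) (a : Fin (n - 1) → ℤ) (p : MvPolynomial (Fin (n - 1)) ℂ)
    (b : Fin (n - 1) →₀ ℕ) :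
    coeff b (rescale3 n ω a p) = ω ^ (∑ i, a i * b i) * coeff b p := by
  induction p using MvPolynomial.induction_on' with
  | monomial u x =>
    rw [rescale3_monomial hω0, coeff_smul, smul_eq_mul, coeff_monomial]
    split_ifs with h
    · rw [h]
    · rw [mul_zero, mul_zero]
  | add p q hp hq => rw [map_add, coeff_add, coeff_add, hp, hq, mul_add]

lemma dvd_sum_mul_of_rescale3_eq_self (hω : IsPrimitiveRoot ω n) (hn : n ≠ 0)
    {a : Fin (n - 1) → ℤ} {p : MvPolynomial (Fin (n - 1)) ℂ} (hp : rescale3 n ω a p = p)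
    {b : Fin (n - 1) →₀ ℕ} (hb : b ∈ p.support) :
    (n : ℤ) ∣ ∑ i, a i * b i := by
  rw [← hω.zpow_eq_one_iff_dvd]
  have := congrArg (coeff b) hp
  rw [coeff_rescale3 (hω.ne_zero hn)] at this
  exact mul_eq_right₀ (mem_support_iff.mp hb) |>.mp this

lemma invH_monomial (hω : IsPrimitiveRoot ω n) (hn : n ≠ 0) {b : Fin (n - 1) →₀ ℕ} {k : ℤ}
    (hb : ∀ i, (n : ℤ) ∣ b i - k * (((i : ℕ) : ℤ) + 1)) (x : ℂ) :
    invH n ω (monomial b x) := by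
  intro a ha
  have hdvd : (n : ℤ) ∣ ∑ i, a i * b i := by
    have hsplit : ∑ i, a i * (b i : ℤ) = ∑ i, a i * (b i - k * (((i : ℕ) : ℤ) + 1))
        + k * ∑ i : Fin (n - 1), (((i : ℕ) : ℤ) + 1) * a i := by
      rw [Finset.mul_sum, ← Finset.sum_add_distrib]
      exact Finset.sum_congr rfl fun i _ => by ring
    rw [hsplit]
    exact dvd_add (Finset.dvd_sum fun i _ => (hb i).mul_left _) (ha.mul_left k)
  rw [rescale3_monomial (hω.ne_zero hn), (hω.zpow_eq_one_iff_dvd _).mpr hdvd, one_smul]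

end Rescale

section Decomposition

variable {n : ℕ} {ω : ℂ}

lemma X_sub_C_mem_idealI {J : Finset (Fin (n - 1))} (K : Finset (Fin (n - 1)))
    (c : Fin (n - 1) → ℕ) {j : Fin (n - 1)} (hj : j ∈ J) :
    X j - C (ω ^ c j) ∈ idealI n ω J K c :=
  Ideal.subset_span (Or.inl ⟨j, hj, rfl⟩)

lemma exists_dvd_sub_mul_of_invHJ (hω : IsPrimitiveRoot ω n) (hn : n ≠ 0)
    {J : Finset (Fin (n - 1))} {p : MvPolynomial (Fin (n - 1)) ℂ} (hp : invHJ n ω J p)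
    {b : Fin (n - 1) →₀ ℕ} (hb : b ∈ p.support) :
    ∃ k : ℤ, ∀ i ∉ J, (n : ℤ) ∣ b i - k * (((i : ℕ) : ℤ) + 1) := by
  have hdvd : ∀ a : Fin (n - 1) → ℤ, (n : ℤ) ∣ ∑ i ∈ Jᶜ, a i * (((i : ℕ) : ℤ) + 1) →
      (n : ℤ) ∣ ∑ i ∈ Jᶜ, a i * b i := by
    intro a ha
    set a' : Fin (n - 1) → ℤ := fun i => if i ∈ J then 0 else a i
    have hsum : ∀ f : Fin (n - 1) → ℤ, ∑ i, a' i * f i = ∑ i ∈ Jᶜ, a i * f i := fun f => by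
      simp [a', ite_mul, Finset.sum_ite, Finset.filter_not, Finset.compl_eq_univ_sdiff]
    have hinv : HJcond n J a' := ⟨by simpa only [Hcond, mul_comm _ (a' _), hsum] using ha,
      fun j hj => by simp [a', hj]⟩
    simpa only [hsum] using dvd_sum_mul_of_rescale3_eq_self hω hn (hp a' hinv) hb
  obtain ⟨k, hk⟩ := exists_dvd_sub_mul_of_forall_dvd (Int.natCast_ne_zero.mpr hn) Jᶜ _ _ hdvd
  exact ⟨k, fun i hi => hk i (Finset.mem_compl.mpr hi)⟩

lemma exists_invH_monomial_sub_mem_idealI (hω : IsPrimitiveRoot ω n) (hn : n ≠ 0)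
    {J : Finset (Fin (n - 1))} (K : Finset (Fin (n - 1))) (c : Fin (n - 1) → ℕ)
    {b : Fin (n - 1) →₀ ℕ} {k : ℤ} (hb : ∀ i ∉ J, (n : ℤ) ∣ b i - k * (((i : ℕ) : ℤ) + 1))
    (x : ℂ) :
    ∃ g, invH n ω g ∧ monomial b x - g ∈ idealI n ω J K c := by
  obtain ⟨b', hb'J, hb'⟩ := exists_eq_on_compl_forall_dvd_sub
    (Int.natCast_ne_zero.mpr hn) J b _ hb
  set P : (Fin (n - 1) →₀ ℕ) → ℂ := fun β => ∏ j ∈ J, (ω ^ c j) ^ β j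
  have hP : P b' ≠ 0 :=
    Finset.prod_ne_zero_iff.mpr fun j _ => pow_ne_zero _ (pow_ne_zero _ (hω.ne_zero hn))
  exact ⟨monomial b' (x * P b / P b'), invH_monomial hω hn hb' _,
    monomial_sub_monomial_mem_of_X_sub_C_mem (fun j hj => X_sub_C_mem_idealI K c hj)
      (fun i hi => (hb'J i hi).symm) (div_mul_cancel₀ _ hP).symm⟩

lemma exists_invH_sub_mem_idealI (hω : IsPrimitiveRoot ω n) (hn : n ≠ 0)
    {J : Finset (Fin (n - 1))} (K : Finset (Fin (n - 1))) (c : Fin (n - 1) → ℕ)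
    {p : MvPolynomial (Fin (n - 1)) ℂ} (hp : invHJ n ω J p) :
    ∃ g, invH n ω g ∧ p - g ∈ idealI n ω J K c := by
  have hterm : ∀ b ∈ p.support,
      ∃ g, invH n ω g ∧ monomial b (coeff b p) - g ∈ idealI n ω J K c := fun b hb =>
    have ⟨_, hk⟩ := exists_dvd_sub_mul_of_invHJ hω hn hp hb
    exists_invH_monomial_sub_mem_idealI hω hn K c hk _
  choose! g hg hgI using hterm
  refine ⟨∑ b ∈ p.support, g b, fun a ha => ?_, ?_⟩
  · rw [map_sum]
    exact Finset.sum_congr rfl fun b hb => hg b hb a ha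
  · nth_rewrite 1 [p.as_sum]
    rw [← Finset.sum_sub_distrib]
    exact Ideal.sum_mem _ hgI

end Decomposition

theorem stmt3_general (n : ℕ) (hn : 2 ≤ n) (ω : ℂ) (hω : IsPrimitiveRoot ω n)
    (J K : Finset (Fin (n - 1)))
    (c : Fin (n - 1) → ℕ) :
    {p : MvPolynomial (Fin (n - 1)) ℂ | invHJ n ω J p}
      = {p : MvPolynomial (Fin (n - 1)) ℂ |
          ∃ g h, invH n ω g ∧ (h ∈ idealI n ω J K c ∧ invHJ n ω J h) ∧ p = g + h} := by
  ext p
  constructor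
  · intro hp
    obtain ⟨g, hg, hgI⟩ := exists_invH_sub_mem_idealI hω (by omega) K c hp
    refine ⟨g, p - g, hg, ⟨hgI, fun a ha => ?_⟩, (add_sub_cancel g p).symm⟩
    rw [map_sub, hp a ha, hg a ha.1]
  · rintro ⟨g, h, hg, ⟨-, hh⟩, rfl⟩ a ha
    rw [map_add, hg a ha.1, hh a ha]

/-- `A^{H_J} = A^H + I^{H_J}`, where `I^{H_J} = I ∩ A^{H_J}`. -/
theorem stmt3 (n : ℕ) (hn : 2 ≤ n) (ω : ℂ) (hω : IsPrimitiveRoot ω n)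
    (J K : Finset (Fin (n - 1))) (hJK : Disjoint J K)
    (c : Fin (n - 1) → ℕ) (hc : ∀ j, c j ≤ n - 1) :
    {p : MvPolynomial (Fin (n - 1)) ℂ | invHJ n ω J p}
      = {p : MvPolynomial (Fin (n - 1)) ℂ |
          ∃ g h, invH n ω g ∧ (h ∈ idealI n ω J K c ∧ invHJ n ω J h) ∧ p = g + h} :=
  stmt3_general n hn ω hω J K c
end

section
/- Let A = ℂ[x, y] with the ℤ/2 action where the nontrivial element acts by multiplication by −1 on both variables, and let I = ⟨(x−1)(y−1)⟩. Then the natural map A^{ℤ/2} = ℂ[x², xy, y²] → A/I is not surjective. -/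
open MvPolynomial

/-- Let `A = ℂ[x, y]` with the `ℤ/2`-action where the nontrivial element acts by `-1` on
both variables, and `I = ⟨(x−1)(y−1)⟩`.  The natural map from the invariant subring
`A^{ℤ/2} = ℂ[x², xy, y²]` to `A/I` is not surjective. -/
theorem stmt5 :
    ¬ Set.SurjOn
        (Ideal.Quotient.mk (Ideal.span
          {((X 0 : MvPolynomial (Fin 2) ℂ) - 1) * ((X 1 : MvPolynomial (Fin 2) ℂ) - 1)}))
        {p : MvPolynomial (Fin 2) ℂ |
          aeval (fun i => -(X i : MvPolynomial (Fin 2) ℂ)) p = p}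
        Set.univ := by
  intro h
  obtain ⟨p, hp, hmk⟩ := h (Set.mem_univ
    (Ideal.Quotient.mk _ (X 0 : MvPolynomial (Fin 2) ℂ)))
  rw [Ideal.Quotient.eq, Ideal.mem_span_singleton] at hmk
  obtain ⟨q, hq⟩ := hmk
  set c : Fin 2 → ℂ := ![1, -1]
  set c' : Fin 2 → ℂ := ![-1, 1]
  have hinv : aeval c p = aeval c' p := by
    conv_lhs => rw [← hp]
    rw [← AlgHom.comp_apply, comp_aeval]
    have : (fun i => (aeval c) (-(X i : MvPolynomial (Fin 2) ℂ))) = c' := by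
      funext i; fin_cases i <;> simp [c, c']
    rw [this]
  have h1 : aeval c p - 1 = 0 := by
    have := congrArg (aeval c) hq
    simpa [c] using this
  have h2 : aeval c' p - (-1) = 0 := by
    have := congrArg (aeval c') hq
    simpa [c'] using this
  rw [sub_eq_zero] at h1 h2
  rw [h1, h2] at hinv
  norm_num at hinv
end

section
/- Let n ≥ 2, J ⊆ {1,…,n−1}, and d* = gcd of the set ({1,…,n} \ J) ∪ {n} (i.e., the gcd of all elements of {1,…,n} not in J, together with n). Define φ: ℤ^J → ℤ_{d*} by φ((c_j)) = Σ_{j∈J} j·c_j mod d*. Then two tuples (c_j), (d_j) ∈ {0,…,n−1}^J satisfy: there exist integers (a_r)_{r∉J} with Σ_{r∉J, r≤n−1} r·a_r ≡ −Σ_{j∈J} j(d_j − c_j) mod n, if and only if φ((c_j)) = φ((d_j)). Moreover φ is surjective onto ℤ_{d*}. -/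
/-!
Both parts rest on Bézout for finitely many integers: the combinations `∑ s * a s` over
`s ∈ S` are exactly the multiples of `gcd S`. Since `{1,…,n} \ J = {1,…,n-1} \ J ∪ {n}`,
solving the congruence modulo `n` with coefficients indexed by `{1,…,n-1} \ J` is the same as
writing `∑ j c_j - ∑ j d_j` as a combination of `{1,…,n} \ J`, i.e. being a multiple of `d*`.
For surjectivity, write `r` as a combination of `{1,…,n}` (whose gcd is `1`) and discard
the part supported off `J`, which is a multiple of `d*`.
-/

namespace Finset

variable {ι : Type*} [DecidableEq ι]

lemma sum_mul_update_of_notMem {T : Finset ι} {i : ι} (hi : i ∉ T) (f a : ι → ℤ) (x : ℤ) :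
    ∑ t ∈ T, f t * Function.update a i x t = ∑ t ∈ T, f t * a t :=
  sum_congr rfl fun t ht => by rw [Function.update_of_ne (ne_of_mem_of_not_mem ht hi)]

lemma sum_insert_mul_update {T : Finset ι} {i : ι} (hi : i ∉ T) (f a : ι → ℤ) (x : ℤ) :
    ∑ t ∈ insert i T, f t * Function.update a i x t = f i * x + ∑ t ∈ T, f t * a t := by
  rw [sum_insert hi, Function.update_self, sum_mul_update_of_notMem hi]

lemma exists_sum_mul_eq_iff_gcd_dvd (S : Finset ι) (f : ι → ℕ) (m : ℤ) :
    (∃ a : ι → ℤ, ∑ i ∈ S, (f i : ℤ) * a i = m) ↔ ((S.gcd f : ℕ) : ℤ) ∣ m := by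
  constructor
  · rintro ⟨a, rfl⟩
    exact dvd_sum fun i hi => (Int.natCast_dvd_natCast.mpr (gcd_dvd hi)).mul_right _
  · induction S using Finset.induction_on generalizing m with
    | empty => simp +contextual
    | insert i S hi ih =>
      intro h
      rw [gcd_insert, gcd_eq_nat_gcd, ← Int.gcd_natCast_natCast, Int.coe_gcd,
        gcd_dvd_iff_exists] at h
      obtain ⟨x, y, rfl⟩ := h
      obtain ⟨b, hb⟩ := ih _ (dvd_mul_right _ y)
      exact ⟨Function.update b i x, by rw [sum_insert_mul_update hi, hb]⟩

lemma exists_dvd_sum_mul_sub_iff_gcd_insert_dvd {T : Finset ι} {i : ι} (hi : i ∉ T)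
    (f : ι → ℕ) (m : ℤ) :
    (∃ a : ι → ℤ, (f i : ℤ) ∣ ∑ t ∈ T, (f t : ℤ) * a t - m) ↔
      (((insert i T).gcd f : ℕ) : ℤ) ∣ m := by
  rw [← exists_sum_mul_eq_iff_gcd_dvd]
  constructor
  · rintro ⟨a, k, hk⟩
    exact ⟨Function.update a i (-k), by rw [sum_insert_mul_update hi]; linarith⟩
  · rintro ⟨a, ha⟩
    rw [sum_insert hi] at ha
    exact ⟨a, -a i, by linarith⟩

lemma exists_gcd_sdiff_dvd_sum_mul_sub {S U : Finset ι} (hSU : S ⊆ U) (f : ι → ℕ)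
    (hU : U.gcd f = 1) (r : ℤ) :
    ∃ a : ι → ℤ, (((U \ S).gcd f : ℕ) : ℤ) ∣ ∑ i ∈ S, (f i : ℤ) * a i - r := by
  obtain ⟨a, ha⟩ := (exists_sum_mul_eq_iff_gcd_dvd U f r).mpr (by simp [hU])
  refine ⟨a, (exists_sum_mul_eq_iff_gcd_dvd (U \ S) f _).mp ⟨-a, ?_⟩⟩
  rw [← ha, ← sum_sdiff hSU]
  simp only [Pi.neg_apply, mul_neg, sum_neg_distrib]
  ring

end Finset

open Finset

theorem stmt6_general (n : ℕ) (hn : 2 ≤ n) (J : Finset ℕ) (hJ : J ⊆ Finset.Icc 1 (n - 1))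
    (c d : ℕ → ℤ) :
    ((∃ a : ℕ → ℤ,
        (n : ℤ) ∣ ((∑ r ∈ Finset.Icc 1 (n - 1) \ J, (r : ℤ) * a r) +
          ∑ j ∈ J, (j : ℤ) * (d j - c j)))
      ↔ ((((Finset.Icc 1 n \ J).gcd id : ℕ) : ℤ) ∣
          (∑ j ∈ J, (j : ℤ) * c j - ∑ j ∈ J, (j : ℤ) * d j))) ∧
    (∀ r : ℤ, ∃ c' : ℕ → ℤ,
      ((((Finset.Icc 1 n \ J).gcd id : ℕ) : ℤ) ∣ (∑ j ∈ J, (j : ℤ) * c' j - r))) := by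
  have hcomplement : Finset.Icc 1 n \ J = insert n (Finset.Icc 1 (n - 1) \ J) := by
    ext x
    have := @hJ x
    simp only [mem_sdiff, mem_Icc, mem_insert] at this ⊢
    grind
  have hnotMem : n ∉ Finset.Icc 1 (n - 1) \ J := by simp only [mem_sdiff, mem_Icc]; omega
  refine ⟨?_, exists_gcd_sdiff_dvd_sum_mul_sub (hJ.trans (Icc_subset_Icc_right (by omega))) id
    (Nat.dvd_one.mp (gcd_dvd (f := id) (mem_Icc.mpr ⟨le_rfl, by omega⟩)))⟩
  rw [hcomplement, ← exists_dvd_sum_mul_sub_iff_gcd_insert_dvd hnotMem]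
  refine exists_congr fun a => Iff.of_eq (congrArg _ ?_)
  simp only [id, mul_sub, sum_sub_distrib]
  ring

/-- Let `n ≥ 2`, `J ⊆ {1,…,n−1}`, and `d* = gcd(({1,…,n} \ J) ∪ {n})`.
For tuples `(c_j), (d_j) ∈ {0,…,n−1}^J`: there exist integers `(a_r)_{r∉J}` with
`Σ_{r∉J, r≤n−1} r·a_r ≡ −Σ_{j∈J} j(d_j − c_j) mod n` if and only if
`Σ_{j∈J} j·c_j ≡ Σ_{j∈J} j·d_j mod d*`.  Moreover `φ((c_j)) = Σ j·c_j mod d*` is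
surjective onto `ℤ_{d*}`. -/
theorem stmt6 (n : ℕ) (hn : 2 ≤ n) (J : Finset ℕ) (hJ : J ⊆ Finset.Icc 1 (n - 1))
    (c d : ℕ → ℤ) (hc : ∀ j ∈ J, 0 ≤ c j ∧ c j ≤ (n : ℤ) - 1)
    (hd : ∀ j ∈ J, 0 ≤ d j ∧ d j ≤ (n : ℤ) - 1) :
    ((∃ a : ℕ → ℤ,
        (n : ℤ) ∣ ((∑ r ∈ Finset.Icc 1 (n - 1) \ J, (r : ℤ) * a r) +
          ∑ j ∈ J, (j : ℤ) * (d j - c j)))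
      ↔ ((((Finset.Icc 1 n \ J).gcd id : ℕ) : ℤ) ∣
          (∑ j ∈ J, (j : ℤ) * c j - ∑ j ∈ J, (j : ℤ) * d j))) ∧
    (∀ r : ℤ, ∃ c' : ℕ → ℤ,
      ((((Finset.Icc 1 n \ J).gcd id : ℕ) : ℤ) ∣ (∑ j ∈ J, (j : ℤ) * c' j - r))) :=
  stmt6_general n hn J hJ c d
end

section
/- Let σ be a row-strict tableau of shape λ ⊢ n, and define I_σ ⊔ J_σ ⊔ K_σ as the partition of {1,…,n−1} where i ∈ J_σ iff i+1 is in the same row as i (directly adjacent conditions as in the paper), and I_σ, K_σ defined accordingly. Suppose K_σ ⊔ I_σ = {n_1 < n_2 < ⋯ < n_r}. Then the maximal divisor d_σ of σ equals gcd(n_1, n_2, …, n_r, n). -/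
open scoped Classical

/-- The set of boxes (row, column), 0-indexed, of the Young diagram of a partition given
as a list of row lengths. -/
def cells (L : List ℕ) : Set (ℕ × ℕ) := {p | p.1 < L.length ∧ p.2 < L.getD p.1 0}

/-- `pos` encodes a tableau of shape `L` with entries `1, …, n`:  `pos i` is the (row,
column) of the box labeled `i`.  It is injective on `{1,…,n}` with image the set of
boxes, and is normalized to `(0,0)` outside `{1,…,n}`. -/
def IsTab (L : List ℕ) (n : ℕ) (pos : ℕ → ℕ × ℕ) : Prop :=
  Set.InjOn pos (Set.Icc 1 n) ∧ pos '' Set.Icc 1 n = cells L ∧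
    ∀ i, i ∉ Set.Icc 1 n → pos i = (0, 0)

/-- Row-strictness: entries increase along each row (left to right). -/
def RowStrict (n : ℕ) (pos : ℕ → ℕ × ℕ) : Prop :=
  ∀ i j, i ∈ Set.Icc 1 n → j ∈ Set.Icc 1 n →
    (pos j).1 = (pos i).1 → (pos j).2 = (pos i).2 + 1 → i < j

/-- A row-strict tableau of shape `L` with entries `1, …, n`. -/
def IsRST (L : List ℕ) (n : ℕ) (pos : ℕ → ℕ × ℕ) : Prop :=
  IsTab L n pos ∧ RowStrict n pos

/-- `(i, j)` with `i > j` is a Springer pair: `i` lies in the same column as `j` or in a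
column strictly to its left, and if the box directly right of `j` is labeled `r` then
`i < r`. -/
def SpringerPair (n : ℕ) (pos : ℕ → ℕ × ℕ) (i j : ℕ) : Prop :=
  1 ≤ j ∧ j < i ∧ i ≤ n ∧ (pos i).2 ≤ (pos j).2 ∧
    ∀ r ∈ Set.Icc 1 n, pos r = ((pos j).1, (pos j).2 + 1) → i < r

/-- A Springer inversion is a Springer pair `(i, j)` such that if `i` is in the same
column as `j` then `i` lies strictly below `j`. -/
def SpringerInv (n : ℕ) (pos : ℕ → ℕ × ℕ) (i j : ℕ) : Prop :=
  SpringerPair n pos i j ∧ ((pos i).2 = (pos j).2 → (pos j).1 < (pos i).1)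

/-- The number of Springer pairs of a tableau. -/
noncomputable def pairsCount (n : ℕ) (pos : ℕ → ℕ × ℕ) : ℕ :=
  {p : ℕ × ℕ | SpringerPair n pos p.1 p.2}.ncard

/-- The number of Springer inversions of a tableau. -/
noncomputable def invCount (n : ℕ) (pos : ℕ → ℕ × ℕ) : ℕ :=
  {p : ℕ × ℕ | SpringerInv n pos p.1 p.2}.ncard

/-- `d` is a divisor of the tableau: `d ∣ n` and the tableau decomposes into blocks of
`d` consecutive boxes with consecutive labels, i.e. whenever `d ∤ i` the box labeled
`i + 1` is directly to the right of the box labeled `i`. -/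
def TabDivisor (n d : ℕ) (pos : ℕ → ℕ × ℕ) : Prop :=
  d ∣ n ∧ ∀ i, 1 ≤ i → i < n → ¬ d ∣ i → pos (i + 1) = ((pos i).1, (pos i).2 + 1)

/-- The quotient tableau `σ/d`: each block of `d` boxes is merged into a single box,
labeled in the same relative order (the block containing `d·m` gets label `m`). -/
def quotTab (d : ℕ) (pos : ℕ → ℕ × ℕ) : ℕ → ℕ × ℕ :=
  fun m => ((pos (d * m)).1, ((pos (d * m)).2 + 1) / d - 1)

/-- `Σ_i (i−1)·λ_i`, the dimension of the Springer fiber of Jordan type `λ`. -/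
def dimB (L : List ℕ) : ℕ := ∑ i ∈ Finset.range L.length, i * L.getD i 0

/-- `L` is a partition of `n`: weakly decreasing positive parts summing to `n`. -/
def IsPartition (L : List ℕ) (n : ℕ) : Prop :=
  L.sum = n ∧ L.Pairwise (· ≥ ·) ∧ ∀ x ∈ L, 0 < x

/-- The labels `i ∈ {1, …, n-1}` that end a block, i.e. `I_σ ⊔ K_σ`. -/
def blockEnds (n : ℕ) (σ : ℕ → ℕ × ℕ) : Finset ℕ :=
  (Finset.Ico 1 n).filter (fun i => σ (i + 1) ≠ ((σ i).1, (σ i).2 + 1))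

theorem tabDivisor_iff_dvd_gcd {n d : ℕ} {σ : ℕ → ℕ × ℕ} :
    TabDivisor n d σ ↔ d ∣ (insert n (blockEnds n σ)).gcd id := by
  rw [Finset.dvd_gcd_iff, Finset.forall_mem_insert]
  simp only [TabDivisor, blockEnds, Finset.mem_filter, Finset.mem_Ico, id, and_imp]
  exact and_congr_right fun _ => forall_congr' fun _ =>
    imp_congr_right fun _ => imp_congr_right fun _ => not_imp_comm

theorem stmt8_general (n : ℕ) (hn : 0 < n)
    (σ : ℕ → ℕ × ℕ) :
    IsGreatest {d : ℕ | 0 < d ∧ TabDivisor n d σ}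
      ((insert n ((Finset.Ico 1 n).filter
        (fun i => σ (i + 1) ≠ ((σ i).1, (σ i).2 + 1)))).gcd id) := by
  have hpos : 0 < (insert n (blockEnds n σ)).gcd id := Nat.pos_of_ne_zero fun h =>
    hn.ne' (Finset.gcd_eq_zero_iff.1 h n (Finset.mem_insert_self _ _))
  exact ⟨⟨hpos, tabDivisor_iff_dvd_gcd.2 dvd_rfl⟩,
    fun d ⟨_, hd⟩ => Nat.le_of_dvd hpos (tabDivisor_iff_dvd_gcd.1 hd)⟩

/-- The maximal divisor `d_σ` of a row-strict tableau `σ` equals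
`gcd(n_1, …, n_r, n)`, where `{n_1, …, n_r} = K_σ ⊔ I_σ` is the set of `i ∈ {1,…,n−1}`
such that `i+1` is *not* directly to the right of `i` (the complement of `J_σ`). -/
theorem stmt8 (L : List ℕ) (n : ℕ) (hL : IsPartition L n) (hn : 0 < n)
    (σ : ℕ → ℕ × ℕ) (hσ : IsRST L n σ) :
    IsGreatest {d : ℕ | 0 < d ∧ TabDivisor n d σ}
      ((insert n ((Finset.Ico 1 n).filter
        (fun i => σ (i + 1) ≠ ((σ i).1, (σ i).2 + 1)))).gcd id) :=
  stmt8_general n hn σ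
end

section
/- Let σ be a row-strict tableau of shape λ ⊢ n and let d be a divisor of σ (so σ decomposes into blocks of size d). Then the map (i, j) ↦ (di, dj) is a bijection from the set of Springer pairs of σ/d that are not Springer inversions onto the set of Springer pairs of σ that are not Springer inversions. Consequently, |pairs(σ)| − |inv(σ)| = |pairs(σ/d)| − |inv(σ/d)|. -/
open scoped Classical

/-! Labels run left to right through each block, so by induction on labels the column of the
box labeled `i` satisfies `col + 1 ≡ i (mod d)`; hence every block fills the columns
`d c, …, d c + d - 1` of one row and `σ` is the `d`-fold horizontal inflation of `σ/d`.
Under the inflation, `(a, b)` is a Springer pair (resp. inversion) of `σ/d` exactly when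
`(d a, d b)` is one of `σ`. Conversely, a Springer pair `(i, j)` of `σ` that is not an
inversion has `d ∣ j` (otherwise `j + 1` is right of `j` and `i < j + 1`) and `i` in the
column of `j`, so `d ∣ i` by the congruence. -/

open Set

variable {L : List ℕ} {n d : ℕ} {σ : ℕ → ℕ × ℕ}

theorem springerPair_finite (n : ℕ) (pos : ℕ → ℕ × ℕ) :
    {p : ℕ × ℕ | SpringerPair n pos p.1 p.2}.Finite :=
  (finite_Iic (n, n)).subset fun _ ⟨_, hji, hin, _⟩ => ⟨hin, by omega⟩

theorem pairsCount_sub_invCount (n : ℕ) (pos : ℕ → ℕ × ℕ) :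
    (pairsCount n pos : ℤ) - invCount n pos =
      {p : ℕ × ℕ | SpringerPair n pos p.1 p.2 ∧ ¬ SpringerInv n pos p.1 p.2}.ncard :=
  (cast_ncard_sdiff (fun _ hp => hp.1) (springerPair_finite n pos)).symm

theorem SpringerPair.col_eq_of_not_springerInv {n : ℕ} {pos : ℕ → ℕ × ℕ} {i j : ℕ}
    (hp : SpringerPair n pos i j) (hni : ¬ SpringerInv n pos i j) : (pos i).2 = (pos j).2 := by
  by_contra hne
  exact hni ⟨hp, fun h => absurd h hne⟩

theorem Nat.mul_mem_Icc_one_iff {d s n : ℕ} (hd : 0 < d) :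
    d * s ∈ Icc 1 n ↔ s ∈ Icc 1 (n / d) := by
  simp only [mem_Icc, Nat.le_div_iff_mul_le hd, mul_comm s d, Nat.one_le_iff_ne_zero,
    mul_ne_zero_iff, hd.ne', ne_eq, not_false_eq_true, true_and]

theorem IsRST.exists_left_neighbor (hσ : IsRST L n σ) {i : ℕ} (hi : i ∈ Icc 1 n)
    (hc : 0 < (σ i).2) : ∃ j ∈ Icc 1 n, j < i ∧ σ j = ((σ i).1, (σ i).2 - 1) := by
  have hcell : σ i ∈ cells L := hσ.1.2.1 ▸ mem_image_of_mem σ hi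
  have hleft : ((σ i).1, (σ i).2 - 1) ∈ cells L :=
    ⟨hcell.1, lt_of_le_of_lt (Nat.sub_le _ _) hcell.2⟩
  rw [← hσ.1.2.1] at hleft
  obtain ⟨j, hj, hje⟩ := hleft
  exact ⟨j, hj, hσ.2 j i hj hi (by rw [hje]) (by rw [hje]; omega), hje⟩

namespace TabDivisor

theorem apply_succ (hdiv : TabDivisor n d σ) {i : ℕ} (hi : i ∈ Icc 1 n) (h : ¬ d ∣ i) :
    σ (i + 1) = ((σ i).1, (σ i).2 + 1) :=
  hdiv.2 i hi.1 (hi.2.lt_of_ne fun hin => h (hin ▸ hdiv.1)) h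

/-- A block starts either in column `0` or directly right of the last box of another block. -/
theorem col_add_one_modEq (hdiv : TabDivisor n d σ) (hσ : IsRST L n σ) {i : ℕ}
    (hi : i ∈ Icc 1 n) : (σ i).2 + 1 ≡ i [MOD d] := by
  induction i using Nat.strong_induction_on with
  | _ i ih =>
  rw [mem_Icc] at hi
  by_cases hprev : d ∣ i - 1
  · have hi1 : 1 ≡ i [MOD d] := (Nat.modEq_iff_dvd' hi.1).mpr hprev
    rcases Nat.eq_zero_or_pos (σ i).2 with hc | hc
    · rwa [hc]
    obtain ⟨j, hj, hji, hje⟩ := hσ.exists_left_neighbor hi hc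
    have hdj : d ∣ j := by
      by_contra hdj
      have : j + 1 = i := hσ.1.1 ⟨by omega, by omega⟩ hi <| by
        rw [hdiv.apply_succ hj hdj, hje]; ext <;> simp only; omega
      exact hdj (by rwa [← this, Nat.add_sub_cancel] at hprev)
    calc (σ i).2 + 1 = (σ j).2 + 1 + 1 := by rw [hje]; simp only; omega
      _ ≡ 0 + 1 [MOD d] := ((ih j hji hj).trans (Nat.modEq_zero_iff_dvd.mpr hdj)).add_right 1
      _ ≡ i [MOD d] := hi1
  · have hi_ne_one : i ≠ 1 := by rintro rfl; exact hprev (dvd_zero d)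
    have hi' : i - 1 ∈ Icc 1 n := ⟨by omega, by omega⟩
    have hstep := hdiv.apply_succ hi' hprev
    rw [Nat.sub_add_cancel hi.1] at hstep
    rw [hstep]
    simpa [Nat.sub_add_cancel hi.1] using (ih (i - 1) (by omega) hi').add_right 1

theorem col_mul_add_one (hdiv : TabDivisor n d σ) (hσ : IsRST L n σ) (hd : 0 < d) {s : ℕ}
    (hs : s ∈ Icc 1 (n / d)) : (σ (d * s)).2 + 1 = d * ((quotTab d σ s).2 + 1) := by
  have hmod := hdiv.col_add_one_modEq hσ ((Nat.mul_mem_Icc_one_iff hd).mpr hs)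
  obtain ⟨t, ht⟩ := (hmod.dvd_iff dvd_rfl).mpr (dvd_mul_right d s)
  have ht1 : t ≠ 0 := by rintro rfl; simp at ht
  simp only [quotTab, ht, Nat.mul_div_cancel_left t hd,
    Nat.sub_add_cancel (Nat.one_le_iff_ne_zero.mpr ht1)]

theorem apply_mul_sub (hdiv : TabDivisor n d σ) (hσ : IsRST L n σ) {s k : ℕ}
    (hs : s ∈ Icc 1 (n / d)) (hk : k < d) :
    σ (d * s - k) = ((quotTab d σ s).1, d * (quotTab d σ s).2 + (d - 1 - k)) := by
  have hd : 0 < d := by omega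
  have hds : d ≤ d * s := Nat.le_mul_of_pos_right d hs.1
  have hsn : d * s ≤ n := ((Nat.mul_mem_Icc_one_iff hd).mpr hs).2
  induction k with
  | zero =>
    have := hdiv.col_mul_add_one hσ hd hs
    rw [mul_add] at this
    rw [Nat.sub_zero, Nat.sub_zero]
    ext
    · rfl
    · simp only; omega
  | succ k ih =>
    have hmem : d * s - (k + 1) ∈ Icc 1 n := ⟨by omega, by omega⟩
    have hndvd : ¬ d ∣ d * s - (k + 1) := by
      rw [Nat.dvd_sub_iff_right (by omega) (dvd_mul_right d s)]
      exact fun h => absurd (Nat.le_of_dvd (by omega) h) (by omega)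
    have hstep := hdiv.apply_succ hmem hndvd
    rw [show d * s - (k + 1) + 1 = d * s - k by omega, ih (by omega), Prod.ext_iff] at hstep
    ext
    · exact hstep.1.symm
    · simp only at hstep ⊢; omega

theorem col_le_col_iff (hdiv : TabDivisor n d σ) (hσ : IsRST L n σ) (hd : 0 < d) {a b : ℕ}
    (ha : a ∈ Icc 1 (n / d)) (hb : b ∈ Icc 1 (n / d)) :
    (σ (d * a)).2 ≤ (σ (d * b)).2 ↔ (quotTab d σ a).2 ≤ (quotTab d σ b).2 := by
  rw [← add_le_add_iff_right 1, hdiv.col_mul_add_one hσ hd ha, hdiv.col_mul_add_one hσ hd hb,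
    Nat.mul_le_mul_left_iff hd, add_le_add_iff_right]

theorem col_eq_col_iff (hdiv : TabDivisor n d σ) (hσ : IsRST L n σ) (hd : 0 < d) {a b : ℕ}
    (ha : a ∈ Icc 1 (n / d)) (hb : b ∈ Icc 1 (n / d)) :
    (σ (d * a)).2 = (σ (d * b)).2 ↔ (quotTab d σ a).2 = (quotTab d σ b).2 := by
  rw [← add_left_inj 1, hdiv.col_mul_add_one hσ hd ha, hdiv.col_mul_add_one hσ hd hb,
    Nat.mul_left_cancel_iff hd, add_left_inj]

/-- The box right of block `b` is the first box of a block `s`, and `d * a` precedes it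
exactly when `a < s`. -/
theorem forall_right_lt_iff (hdiv : TabDivisor n d σ) (hσ : IsRST L n σ) (hd : 0 < d)
    {a b : ℕ} (hb : b ∈ Icc 1 (n / d)) :
    (∀ r ∈ Icc 1 n, σ r = ((σ (d * b)).1, (σ (d * b)).2 + 1) → d * a < r) ↔
      ∀ s ∈ Icc 1 (n / d), quotTab d σ s = ((quotTab d σ b).1, (quotTab d σ b).2 + 1) →
        a < s := by
  rw [hdiv.col_mul_add_one hσ hd hb]
  have hstart : ∀ {s}, s ∈ Icc 1 (n / d) →
      σ (d * s - (d - 1)) = ((quotTab d σ s).1, d * (quotTab d σ s).2) := fun hs => by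
    simpa using hdiv.apply_mul_sub hσ hs (k := d - 1) (by omega)
  constructor
  · intro h s hs hqs
    have hds : d ≤ d * s := Nat.le_mul_of_pos_right d hs.1
    obtain ⟨-, hsn⟩ := (Nat.mul_mem_Icc_one_iff hd).mpr hs
    have := h (d * s - (d - 1)) ⟨by omega, by omega⟩ (by rw [hstart hs, hqs]; rfl)
    exact (Nat.mul_lt_mul_left hd).mp (by omega)
  · intro h r hr hσr
    have hmod := hdiv.col_add_one_modEq hσ hr
    rw [hσr] at hmod
    obtain ⟨s, hs⟩ : d ∣ r + (d - 1) := by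
      refine ((hmod.add_right (d - 1)).dvd_iff dvd_rfl).mp ?_
      rw [add_assoc, show 1 + (d - 1) = d by omega]
      exact dvd_add (dvd_mul_right _ _) dvd_rfl
    obtain ⟨N, hN⟩ := hdiv.1
    obtain ⟨hr1, hrn⟩ := hr
    have hs1 : 1 ≤ s := Nat.one_le_iff_ne_zero.mpr (by rintro rfl; simp at hs; omega)
    have hsN : s ≤ N := Nat.lt_add_one_iff.mp <| (Nat.mul_lt_mul_left hd).mp <| by
      rw [← hs, mul_add, mul_one, ← hN]; omega
    have hsmem : s ∈ Icc 1 (n / d) :=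
      (Nat.mul_mem_Icc_one_iff hd).mp ⟨by omega, hN ▸ Nat.mul_le_mul_left d hsN⟩
    have hqs := hstart hsmem
    rw [show d * s - (d - 1) = r by omega, hσr, Prod.ext_iff] at hqs
    have has := h s hsmem (Prod.ext hqs.1.symm ((Nat.mul_left_cancel_iff hd).mp hqs.2).symm)
    have := Nat.mul_le_mul_left d (show a + 1 ≤ s from has)
    rw [mul_add, mul_one] at this
    omega

theorem springerPair_quotTab_iff (hdiv : TabDivisor n d σ) (hσ : IsRST L n σ) (hd : 0 < d)
    (a b : ℕ) :
    SpringerPair (n / d) (quotTab d σ) a b ↔ SpringerPair n σ (d * a) (d * b) := by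
  constructor
  · rintro ⟨hb, hba, ha, hcol, hright⟩
    have ha' : a ∈ Icc 1 (n / d) := ⟨by omega, ha⟩
    have hb' : b ∈ Icc 1 (n / d) := ⟨hb, by omega⟩
    exact ⟨((Nat.mul_mem_Icc_one_iff hd).mpr hb').1, (Nat.mul_lt_mul_left hd).mpr hba,
      ((Nat.mul_mem_Icc_one_iff hd).mpr ha').2, (hdiv.col_le_col_iff hσ hd ha' hb').mpr hcol,
      (hdiv.forall_right_lt_iff hσ hd hb').mpr hright⟩
  · rintro ⟨hb, hba, ha, hcol, hright⟩
    have ha' : a ∈ Icc 1 (n / d) := (Nat.mul_mem_Icc_one_iff hd).mp ⟨by omega, ha⟩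
    have hb' : b ∈ Icc 1 (n / d) := (Nat.mul_mem_Icc_one_iff hd).mp ⟨hb, by omega⟩
    exact ⟨hb'.1, (Nat.mul_lt_mul_left hd).mp hba, ha'.2,
      (hdiv.col_le_col_iff hσ hd ha' hb').mp hcol,
      (hdiv.forall_right_lt_iff hσ hd hb').mp hright⟩

theorem springerInv_quotTab_iff (hdiv : TabDivisor n d σ) (hσ : IsRST L n σ) (hd : 0 < d)
    (a b : ℕ) : SpringerInv (n / d) (quotTab d σ) a b ↔ SpringerInv n σ (d * a) (d * b) := by
  rw [SpringerInv, SpringerInv, hdiv.springerPair_quotTab_iff hσ hd]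
  refine and_congr_right fun ⟨hb, hba, ha, _⟩ => ?_
  have ha' : a ∈ Icc 1 (n / d) := (Nat.mul_mem_Icc_one_iff hd).mp ⟨by omega, ha⟩
  have hb' : b ∈ Icc 1 (n / d) := (Nat.mul_mem_Icc_one_iff hd).mp ⟨hb, by omega⟩
  rw [hdiv.col_eq_col_iff hσ hd ha' hb']
  rfl

theorem dvd_of_springerPair (hdiv : TabDivisor n d σ) {i j : ℕ} (hp : SpringerPair n σ i j) :
    d ∣ j := by
  obtain ⟨hj, hji, hin, -, hright⟩ := hp
  by_contra h
  have := hright (j + 1) ⟨by omega, by omega⟩ (hdiv.apply_succ ⟨hj, by omega⟩ h)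
  omega

theorem dvd_of_springerPair_of_col_eq (hdiv : TabDivisor n d σ) (hσ : IsRST L n σ) {i j : ℕ}
    (hp : SpringerPair n σ i j) (hcol : (σ i).2 = (σ j).2) : d ∣ i := by
  obtain ⟨hj, hji, hin, -⟩ := id hp
  have hij : i ≡ j [MOD d] := calc
    i ≡ (σ i).2 + 1 [MOD d] := (hdiv.col_add_one_modEq hσ ⟨by omega, hin⟩).symm
    _ = (σ j).2 + 1 := by rw [hcol]
    _ ≡ j [MOD d] := hdiv.col_add_one_modEq hσ ⟨hj, by omega⟩
  exact (hij.dvd_iff dvd_rfl).mpr (hdiv.dvd_of_springerPair hp)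

theorem bijOn_quotTab (hdiv : TabDivisor n d σ) (hσ : IsRST L n σ) (hd : 0 < d) :
    BijOn (fun p : ℕ × ℕ => (d * p.1, d * p.2))
      {p : ℕ × ℕ | SpringerPair (n / d) (quotTab d σ) p.1 p.2 ∧
        ¬ SpringerInv (n / d) (quotTab d σ) p.1 p.2}
      {p : ℕ × ℕ | SpringerPair n σ p.1 p.2 ∧ ¬ SpringerInv n σ p.1 p.2} := by
  have key (a b : ℕ) := and_congr (hdiv.springerPair_quotTab_iff hσ hd a b)
    (not_congr (hdiv.springerInv_quotTab_iff hσ hd a b))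
  refine ⟨fun p hp => (key p.1 p.2).mp hp, fun p _ p' _ h => ?_, ?_⟩
  · simp only [Prod.mk.injEq, Nat.mul_left_cancel_iff hd] at h
    exact Prod.ext h.1 h.2
  · rintro ⟨i, j⟩ ⟨hp, hni⟩
    obtain ⟨a, rfl⟩ :=
      hdiv.dvd_of_springerPair_of_col_eq hσ hp (hp.col_eq_of_not_springerInv hni)
    obtain ⟨b, rfl⟩ := hdiv.dvd_of_springerPair hp
    exact ⟨(a, b), (key a b).mpr ⟨hp, hni⟩, rfl⟩

end TabDivisor

theorem stmt9_general (L : List ℕ) (n d : ℕ) (σ : ℕ → ℕ × ℕ)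
    (hσ : IsRST L n σ) (hd : 0 < d) (hdiv : TabDivisor n d σ) :
    Set.BijOn (fun p : ℕ × ℕ => (d * p.1, d * p.2))
      {p : ℕ × ℕ | SpringerPair (n / d) (quotTab d σ) p.1 p.2 ∧
        ¬ SpringerInv (n / d) (quotTab d σ) p.1 p.2}
      {p : ℕ × ℕ | SpringerPair n σ p.1 p.2 ∧ ¬ SpringerInv n σ p.1 p.2} ∧
    (pairsCount n σ : ℤ) - (invCount n σ : ℤ)
      = (pairsCount (n / d) (quotTab d σ) : ℤ) - (invCount (n / d) (quotTab d σ) : ℤ) := by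
  have hbij := hdiv.bijOn_quotTab hσ hd
  refine ⟨hbij, ?_⟩
  rw [pairsCount_sub_invCount, pairsCount_sub_invCount, hbij.ncard_eq]

/-- Let `σ` be a row-strict tableau of shape `λ ⊢ n` and `d` a divisor of `σ`.  Then
`(i, j) ↦ (di, dj)` is a bijection from the Springer pairs of `σ/d` that are not
Springer inversions onto the Springer pairs of `σ` that are not Springer inversions.
Consequently `|pairs(σ)| − |inv(σ)| = |pairs(σ/d)| − |inv(σ/d)|`. -/
theorem stmt9 (L : List ℕ) (n d : ℕ) (hL : IsPartition L n) (σ : ℕ → ℕ × ℕ)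
    (hσ : IsRST L n σ) (hd : 0 < d) (hdiv : TabDivisor n d σ) :
    Set.BijOn (fun p : ℕ × ℕ => (d * p.1, d * p.2))
      {p : ℕ × ℕ | SpringerPair (n / d) (quotTab d σ) p.1 p.2 ∧
        ¬ SpringerInv (n / d) (quotTab d σ) p.1 p.2}
      {p : ℕ × ℕ | SpringerPair n σ p.1 p.2 ∧ ¬ SpringerInv n σ p.1 p.2} ∧
    (pairsCount n σ : ℤ) - (invCount n σ : ℤ)
      = (pairsCount (n / d) (quotTab d σ) : ℤ) - (invCount (n / d) (quotTab d σ) : ℤ) :=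
  stmt9_general L n d σ hσ hd hdiv
end

section
/- For every row-strict tableau σ of shape λ ⊢ n, the number of Springer pairs of σ equals Σ_i (i−1)λ_i, where λ = (λ_1 ≥ λ_2 ≥ …). Equivalently, |pairs(σ)| depends only on the shape λ and equals the dimension of the Springer fiber of type λ. -/
open scoped Classical

/-! Fix an entry `i` in column `k`. In every row the entries from column `k` onwards
increase, so such a row contains a `j` with `(i, j)` a Springer pair exactly when its
entry in column `k` is smaller than `i`, and then `j` is unique: the last entry of the row
below `i`. Hence the pairs `(i, ·)` correspond to the entries of column `k` smaller than
`i`. Summed over `i`, this counts the pairs of entries sharing a column, which equally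
is `∑ᵢ (number of boxes above i) = ∑ᵣ r λᵣ`, since the shape is a partition. -/

open Finset

theorem sum_card_filter_eq_card_filter_product {α β : Type*} (s : Finset α) (t : Finset β)
    (p : α → β → Prop) [∀ a b, Decidable (p a b)] :
    ∑ a ∈ s, #{b ∈ t | p a b} = #{q ∈ s ×ˢ t | p q.1 q.2} := by
  rw [card_filter, sum_product]
  exact sum_congr rfl fun a _ => card_filter _ _

theorem sum_card_filter_lt_eq {ι α β : Type*} [LinearOrder α] [LinearOrder β]
    (s : Finset ι) (R : ι → ι → Prop) [DecidableRel R] (hR : ∀ x y, R x y → R y x)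
    (f : ι → α) (g : ι → β) (hf : ∀ x ∈ s, ∀ y ∈ s, R x y → f x = f y → x = y)
    (hg : ∀ x ∈ s, ∀ y ∈ s, R x y → g x = g y → x = y) :
    ∑ i ∈ s, #{x ∈ s | R x i ∧ f x < f i} =
      ∑ i ∈ s, #{x ∈ s | R x i ∧ g x < g i} := by
  simp only [sum_card_filter_eq_card_filter_product]
  -- a pair ordered the wrong way for `g` is swapped
  refine card_nbij' (fun q => if g q.2 < g q.1 then q else q.swap)
    (fun q => if f q.2 < f q.1 then q else q.swap) ?_ ?_ ?_ ?_
  all_goals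
    rintro ⟨i, x⟩ hq
    simp only [coe_filter, mem_product, Set.mem_ofPred_eq] at hq ⊢
    obtain ⟨⟨hi, hx⟩, hR', hlt⟩ := hq
    have hf' := hf x hx i hi hR'
    have hg' := hg x hx i hi hR'
    have := hR x i hR'
    split_ifs <;> grind

theorem pairsCount_eq_sum (n : ℕ) (σ : ℕ → ℕ × ℕ) :
    pairsCount n σ = ∑ i ∈ Icc 1 n, #{j ∈ Icc 1 n | SpringerPair n σ i j} := by
  rw [sum_card_filter_eq_card_filter_product, pairsCount, ← Set.ncard_coe_finset]
  congr 1
  ext ⟨i, j⟩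
  simp only [Set.mem_ofPred_eq, coe_filter, mem_product, mem_Icc]
  constructor
  · intro h
    have ⟨hj, hji, hin, _⟩ := h
    exact ⟨⟨⟨by omega, hin⟩, hj, by omega⟩, h⟩
  · exact fun h => h.2

section Tableau

variable {L : List ℕ} {n : ℕ} {σ : ℕ → ℕ × ℕ}

theorem mem_cells_of_col_le {r c c' : ℕ} (h : (r, c) ∈ cells L) (hc : c' ≤ c) :
    (r, c') ∈ cells L :=
  ⟨h.1, hc.trans_lt h.2⟩

theorem getD_le_getD_of_le (hL : L.Pairwise (· ≥ ·)) {r r' : ℕ} (h : r' ≤ r)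
    (hr : r < L.length) : L.getD r 0 ≤ L.getD r' 0 := by
  rcases h.eq_or_lt with rfl | h
  · rfl
  · rw [List.getD_eq_getElem _ _ hr, List.getD_eq_getElem _ _ (h.trans hr)]
    exact List.pairwise_iff_getElem.mp hL r' r (h.trans hr) hr h

theorem mem_cells_of_row_le (hL : L.Pairwise (· ≥ ·)) {r c r' : ℕ} (h : (r, c) ∈ cells L)
    (hr : r' ≤ r) : (r', c) ∈ cells L :=
  ⟨hr.trans_lt h.1, h.2.trans_le (getD_le_getD_of_le hL hr h.1)⟩

theorem IsTab.bijOn (hσ : IsTab L n σ) : Set.BijOn σ ↑(Icc 1 n) (cells L) := by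
  rw [coe_Icc, ← hσ.2.1]
  exact hσ.1.bijOn_image

theorem card_filter_mem_eq (hσ : Set.BijOn σ ↑(Icc 1 n) (cells L)) (t : Finset (ℕ × ℕ))
    (ht : ↑t ⊆ cells L) : #{x ∈ Icc 1 n | σ x ∈ t} = #t := by
  rw [← card_image_of_injOn (hσ.injOn.mono (coe_subset.mpr (filter_subset _ _)))]
  congr 1
  ext p
  simp only [mem_image, mem_filter]
  constructor
  · rintro ⟨x, ⟨-, hx⟩, rfl⟩
    exact hx
  · intro hp
    obtain ⟨x, hx, rfl⟩ := hσ.surjOn (ht hp)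
    exact ⟨x, ⟨hx, hp⟩, rfl⟩

theorem card_filter_fst_eq (hσ : Set.BijOn σ ↑(Icc 1 n) (cells L)) {r : ℕ}
    (hr : r < L.length) : #{x ∈ Icc 1 n | (σ x).1 = r} = L.getD r 0 := by
  have hrow : ∀ x ∈ Icc 1 n,
      (σ x).1 = r ↔ σ x ∈ (range (L.getD r 0)).image (fun c => (r, c)) := by
    intro x hx
    have hcol := (hσ.mapsTo hx).2
    simp only [mem_image, mem_range, Prod.ext_iff]
    constructor
    · rintro rfl
      exact ⟨_, hcol, rfl, rfl⟩
    · rintro ⟨c, -, rfl, -⟩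
      rfl
  rw [filter_congr hrow, card_filter_mem_eq hσ, card_image_of_injective _
    (fun a b h => (Prod.ext_iff.mp h).2), card_range]
  intro p hp
  obtain ⟨c, hc, rfl⟩ := mem_image.mp hp
  exact ⟨hr, mem_range.mp hc⟩

theorem sum_fst_eq_dimB (hσ : Set.BijOn σ ↑(Icc 1 n) (cells L)) :
    ∑ i ∈ Icc 1 n, (σ i).1 = dimB L := by
  rw [dimB, ← sum_fiberwise_of_maps_to (g := fun i => (σ i).1) (t := range L.length)
    fun i hi => mem_range.mpr (hσ.mapsTo hi).1]
  refine sum_congr rfl fun r hr => ?_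
  rw [sum_congr rfl fun i hi => (mem_filter.mp hi).2, sum_const, smul_eq_mul, mul_comm,
    card_filter_fst_eq hσ (mem_range.mp hr)]

theorem card_filter_above_eq (hσ : Set.BijOn σ ↑(Icc 1 n) (cells L))
    (hL : L.Pairwise (· ≥ ·)) {i : ℕ} (hi : i ∈ Icc 1 n) :
    #{x ∈ Icc 1 n | (σ x).2 = (σ i).2 ∧ (σ x).1 < (σ i).1} = (σ i).1 := by
  have habove : ∀ x ∈ Icc 1 n, (σ x).2 = (σ i).2 ∧ (σ x).1 < (σ i).1 ↔
      σ x ∈ (range (σ i).1).image (fun r => (r, (σ i).2)) := by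
    intro x _
    simp only [mem_image, mem_range, Prod.ext_iff]
    constructor
    · rintro ⟨hc, hr⟩
      exact ⟨_, hr, rfl, hc.symm⟩
    · rintro ⟨r, hr, rfl, hc⟩
      exact ⟨hc.symm, hr⟩
  rw [filter_congr habove, card_filter_mem_eq hσ, card_image_of_injective _
    (fun a b h => (Prod.ext_iff.mp h).1), card_range]
  intro p hp
  obtain ⟨r, hr, rfl⟩ := mem_image.mp hp
  exact mem_cells_of_row_le hL (hσ.mapsTo hi) (mem_range.mp hr).le

theorem le_of_fst_eq_of_snd_le (hσ : Set.BijOn σ ↑(Icc 1 n) (cells L)) (hrs : RowStrict n σ)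
    {x y : ℕ} (hx : x ∈ Icc 1 n) (hy : y ∈ Icc 1 n) (hrow : (σ x).1 = (σ y).1)
    (hcol : (σ x).2 ≤ (σ y).2) : x ≤ y := by
  obtain ⟨d, hd⟩ := Nat.exists_eq_add_of_le hcol
  clear hcol
  induction d generalizing y with
  | zero => exact (hσ.injOn hx hy (Prod.ext hrow hd.symm)).le
  | succ d ih =>
    obtain ⟨z, hz, hσz⟩ := hσ.surjOn (mem_cells_of_col_le (c' := (σ x).2 + d)
      (hσ.mapsTo hy) (by omega))
    have hxz : x ≤ z := ih hz (by rw [hσz, hrow]) (by rw [hσz])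
    have hzy : z < y := hrs z y (by simpa using hz) (by simpa using hy) (by rw [hσz])
      (by rw [hσz]; omega)
    omega

theorem SpringerPair.snd_le_of_fst_eq (hσ : Set.BijOn σ ↑(Icc 1 n) (cells L))
    (hrs : RowStrict n σ) {i j j' : ℕ} (h : SpringerPair n σ i j) (hj' : j' ∈ Icc 1 n)
    (hrow : (σ j').1 = (σ j).1) (hj'i : j' < i) : (σ j').2 ≤ (σ j).2 := by
  by_contra! hlt
  -- the box right of `j` exists; its entry `z` satisfies `i < z ≤ j'`
  have hcell : ((σ j).1, (σ j).2 + 1) ∈ cells L :=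
    hrow ▸ mem_cells_of_col_le (hσ.mapsTo hj') hlt
  obtain ⟨z, hz, hσz⟩ := hσ.surjOn hcell
  have hiz : i < z := h.2.2.2.2 z (by simpa using hz) hσz
  have hzj' : z ≤ j' :=
    le_of_fst_eq_of_snd_le hσ hrs hz hj' (by rw [hσz, hrow]) (by rw [hσz]; omega)
  omega

theorem exists_springerPair_fst_eq (hrs : RowStrict n σ) {i x : ℕ} (hi : i ∈ Icc 1 n)
    (hx : x ∈ Icc 1 n) (hcol : (σ x).2 = (σ i).2) (hxi : x < i) :
    ∃ j ∈ Icc 1 n, SpringerPair n σ i j ∧ (σ j).1 = (σ x).1 := by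
  set S := {j ∈ Icc 1 n | (σ j).1 = (σ x).1 ∧ (σ i).2 ≤ (σ j).2 ∧ j < i}
  have hxS : x ∈ S := mem_filter.mpr ⟨hx, rfl, hcol.ge, hxi⟩
  obtain ⟨hj, hjrow, hjcol, hji⟩ := mem_filter.mp (S.max'_mem ⟨x, hxS⟩)
  set j := S.max' ⟨x, hxS⟩
  refine ⟨j, hj, ⟨(mem_Icc.mp hj).1, hji, (mem_Icc.mp hi).2, hjcol, ?_⟩, hjrow⟩
  intro r hr hσr
  have hjr : j < r := hrs j r (by simpa using hj) hr (by rw [hσr]) (by rw [hσr])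
  by_contra! hri
  have hrS : r ∈ S := by
    refine mem_filter.mpr ⟨by simpa using hr, by rw [hσr, hjrow], by rw [hσr]; omega, ?_⟩
    refine hri.lt_of_ne ?_
    rintro rfl
    rw [hσr] at hjcol
    omega
  exact absurd (S.le_max' r hrS) (not_le.mpr hjr)

theorem card_springerPair_eq (hσ : Set.BijOn σ ↑(Icc 1 n) (cells L)) (hrs : RowStrict n σ)
    {i : ℕ} (hi : i ∈ Icc 1 n) :
    #{j ∈ Icc 1 n | SpringerPair n σ i j} =
      #{x ∈ Icc 1 n | (σ x).2 = (σ i).2 ∧ x < i} := by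
  have hpairs : Set.InjOn (fun j => (σ j).1)
      ({j ∈ Icc 1 n | SpringerPair n σ i j} : Finset ℕ) := by
    intro j₁ h₁ j₂ h₂ hrow
    obtain ⟨hj₁, hsp₁⟩ := mem_filter.mp h₁
    obtain ⟨hj₂, hsp₂⟩ := mem_filter.mp h₂
    exact hσ.injOn hj₁ hj₂ (Prod.ext hrow (le_antisymm
      (hsp₂.snd_le_of_fst_eq hσ hrs hj₁ hrow hsp₁.2.1)
      (hsp₁.snd_le_of_fst_eq hσ hrs hj₂ hrow.symm hsp₂.2.1)))
  have hcolumn : Set.InjOn (fun x => (σ x).1)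
      ({x ∈ Icc 1 n | (σ x).2 = (σ i).2 ∧ x < i} : Finset ℕ) := by
    intro x₁ h₁ x₂ h₂ hrow
    obtain ⟨hx₁, hcol₁, -⟩ := mem_filter.mp h₁
    obtain ⟨hx₂, hcol₂, -⟩ := mem_filter.mp h₂
    exact hσ.injOn hx₁ hx₂ (Prod.ext hrow (hcol₁.trans hcol₂.symm))
  rw [← card_image_of_injOn hpairs, ← card_image_of_injOn hcolumn]
  congr 1
  ext r
  simp only [mem_image, mem_filter]
  constructor
  · rintro ⟨j, ⟨hj, hsp⟩, rfl⟩
    obtain ⟨x, hx, hσx⟩ := hσ.surjOn (mem_cells_of_col_le (hσ.mapsTo hj) hsp.2.2.2.1)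
    have hxj : x ≤ j :=
      le_of_fst_eq_of_snd_le hσ hrs hx hj (by rw [hσx]) (by rw [hσx]; exact hsp.2.2.2.1)
    exact ⟨x, ⟨hx, by rw [hσx], by have := hsp.2.1; omega⟩, by rw [hσx]⟩
  · rintro ⟨x, ⟨hx, hcol, hxi⟩, rfl⟩
    obtain ⟨j, hj, hsp, hrow⟩ := exists_springerPair_fst_eq hrs hi hx hcol hxi
    exact ⟨j, ⟨hj, hsp⟩, hrow⟩

end Tableau

/-- For every row-strict tableau `σ` of shape `λ ⊢ n`, the number of Springer pairs of
`σ` equals `Σ_i (i−1)λ_i`; in particular it depends only on the shape `λ` and equals the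
dimension of the Springer fiber of type `λ`. -/
theorem stmt10 (L : List ℕ) (n : ℕ) (hL : IsPartition L n)
    (σ : ℕ → ℕ × ℕ) (hσ : IsRST L n σ) :
    pairsCount n σ = dimB L := by
  obtain ⟨htab, hrs⟩ := hσ
  have hbij := htab.bijOn
  calc pairsCount n σ = ∑ i ∈ Icc 1 n, #{j ∈ Icc 1 n | SpringerPair n σ i j} :=
        pairsCount_eq_sum n σ
    _ = ∑ i ∈ Icc 1 n, #{x ∈ Icc 1 n | (σ x).2 = (σ i).2 ∧ x < i} :=
        sum_congr rfl fun i hi => card_springerPair_eq hbij hrs hi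
    -- both sums count the pairs of distinct entries sharing a column
    _ = ∑ i ∈ Icc 1 n, #{x ∈ Icc 1 n | (σ x).2 = (σ i).2 ∧ (σ x).1 < (σ i).1} :=
        sum_card_filter_lt_eq _ (fun x i => (σ x).2 = (σ i).2) (fun _ _ => Eq.symm) id
          (fun x => (σ x).1) (fun _ _ _ _ _ h => h)
          (fun _ hx _ hy hcol hrow => hbij.injOn hx hy (Prod.ext hrow hcol))
    _ = ∑ i ∈ Icc 1 n, (σ i).1 :=
        sum_congr rfl fun i hi => card_filter_above_eq hbij hL.2.1 hi
    _ = dimB L := sum_fst_eq_dimB hbij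
end

section
/- Define, for a partition λ of n, the polynomial P_λ(t) = Σ_{σ ∈ RST(λ)} t^{|inv(σ)|} (sum over row-strict tableaux of shape λ), and Q_μ(t) = Σ_{σ ∈ IRST(μ)} t^{|inv(σ)|} (sum over indivisible row-strict tableaux, i.e., those with maximal divisor 1). Then P_λ(t) = Σ_{d | λ} t^{D_{λ,d}} Q_{λ/d}(t), where the sum is over positive integers d dividing every part of λ and D_{λ,d} = ((d−1)/d)Σ_i(i−1)λ_i. -/
open scoped Classical

/-- The generating polynomial `P_λ(t) = Σ_{σ ∈ RST(λ)} t^{|inv(σ)|}` over all row-strict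
tableaux of shape `L` (with entries `1,…,n`). -/
noncomputable def Ppoly (L : List ℕ) (n : ℕ) : Polynomial ℤ :=
  ∑ᶠ σ ∈ {σ : ℕ → ℕ × ℕ | IsRST L n σ}, Polynomial.X ^ invCount n σ

/-- The generating polynomial `Q_μ(t) = Σ_{σ ∈ IRST(μ)} t^{|inv(σ)|}` over indivisible
row-strict tableaux (maximal divisor `1`). -/
noncomputable def Qpoly (L : List ℕ) (n : ℕ) : Polynomial ℤ :=
  ∑ᶠ σ ∈ {σ : ℕ → ℕ × ℕ | IsRST L n σ ∧ ∀ e, 0 < e → TabDivisor n e σ → e = 1},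
    Polynomial.X ^ invCount n σ

/-!
A divisor `d` of a row-strict tableau `σ` cuts it into blocks of `d` consecutive labels filling
`d` consecutive boxes of a row, starting in a column divisible by `d`. Hence `σ` is the
inflation of its quotient `σ/d`: every box of `σ/d` is blown up into `d` boxes of a row. Inflation
by `d` is a bijection from the row-strict tableaux of shape `λ/d` onto those of shape `λ` with
divisor `d`, and it multiplies divisors by `d`; since divisors are closed under `lcm`, it maps the
indivisible tableaux onto the tableaux whose maximal divisor is exactly `d`.

The smaller label of a Springer pair of `σ` ends its block, so the Springer pairs of `σ` are the
`(d(a-1)+s, db)` with `(a, b)` a Springer pair of `τ` and `1 ≤ s ≤ d`; only `s = d` can put both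
boxes in one column. So
`|inv σ| = |inv τ| + (d - 1) · #pairs(τ)`, and the number of Springer pairs of a row-strict tableau
of shape `μ` is `Σ_i (i - 1) μ_i`: the partners of a box correspond to the boxes of smaller label
in its column, so the pairs correspond to the pairs of boxes in a common column.
-/

lemma Nat.mul_add_eq_mul_add_iff {d C C' s s' : ℕ} (hs : s < d) (hs' : s' < d) :
    d * C + s = d * C' + s' ↔ C = C' ∧ s = s' := by
  refine ⟨fun h => ⟨?_, ?_⟩, fun ⟨hC, hs⟩ => hC ▸ hs ▸ rfl⟩
  · simpa [Nat.mul_add_div (hs.trans_le' (Nat.zero_le _)), Nat.div_eq_of_lt hs,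
      Nat.div_eq_of_lt hs'] using congrArg (· / d) h
  · simpa [Nat.mul_add_mod, Nat.mod_eq_of_lt hs, Nat.mod_eq_of_lt hs'] using congrArg (· % d) h

lemma Nat.mul_add_lt_mul_add_iff {d C C' s s' : ℕ} (hs : s < d) (hs' : s' < d) :
    d * C + s < d * C' + s' ↔ C < C' ∨ C = C' ∧ s < s' := by
  constructor
  · intro h
    rcases lt_trichotomy C C' with hC | rfl | hC
    · exact Or.inl hC
    · exact Or.inr ⟨rfl, by omega⟩
    · have := Nat.mul_le_mul_left d hC
      rw [Nat.mul_succ] at this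
      omega
  · rintro (hC | ⟨rfl, hss⟩)
    · have := Nat.mul_le_mul_left d hC
      rw [Nat.mul_succ] at this
      omega
    · omega

lemma Nat.mul_add_succ_le_mul {d q s m : ℕ} (hs : s < d) (hq : q < m) : d * q + s + 1 ≤ d * m := by
  have := Nat.mul_add_lt_mul_of_lt_of_lt hq hs
  rw [Nat.mul_comm m] at this
  omega

lemma Nat.mul_add_sub_one_add_one {d : ℕ} (hd : 0 < d) (q : ℕ) :
    d * q + (d - 1) + 1 = d * (q + 1) := by
  rw [Nat.mul_succ]
  omega

lemma Finset.sum_range_mul {M : Type*} [AddCommMonoid M] (f : ℕ → M) (d m : ℕ) :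
    ∑ i ∈ Finset.range (d * m), f i =
      ∑ q ∈ Finset.range m, ∑ s ∈ Finset.range d, f (d * q + s) := by
  induction m with
  | zero => simp
  | succ m ih => rw [Nat.mul_succ, Finset.sum_range_add, ih, Finset.sum_range_succ]

lemma ncard_setOf_eq_sum_range {n : ℕ} {P : ℕ → ℕ → Prop}
    (hP : ∀ i j, P i j → i ∈ Set.Icc 1 n ∧ j ∈ Set.Icc 1 n) :
    {x : ℕ × ℕ | P x.1 x.2}.ncard =
      ∑ i ∈ Finset.range n, ∑ j ∈ Finset.range n, if P (i + 1) (j + 1) then 1 else 0 := by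
  have hset : {x : ℕ × ℕ | P x.1 x.2} = Prod.map (· + 1) (· + 1) ''
      ↑((Finset.range n ×ˢ Finset.range n).filter fun x => P (x.1 + 1) (x.2 + 1)) := by
    ext ⟨i, j⟩
    simp only [Set.mem_ofPred_eq, Finset.coe_filter, Finset.mem_product, Finset.mem_range,
      Set.mem_image, Prod.exists, Prod.map_apply, Prod.mk.injEq]
    constructor
    · intro h
      obtain ⟨⟨hi1, hin⟩, hj1, hjn⟩ := hP i j h
      exact ⟨i - 1, j - 1, ⟨⟨by omega, by omega⟩, by rwa [Nat.sub_add_cancel hi1,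
        Nat.sub_add_cancel hj1]⟩, by omega, by omega⟩
    · rintro ⟨i, j, ⟨-, h⟩, rfl, rfl⟩
      exact h
  rw [hset, (Prod.map_injective.mpr ⟨add_left_injective 1, add_left_injective 1⟩).injOn.ncard_image,
    Set.ncard_coe_finset, Finset.card_filter, Finset.sum_product]

lemma List.Pairwise.getD_le_getD {L : List ℕ} (hL : L.Pairwise (· ≥ ·)) {p p' : ℕ}
    (hpp : p ≤ p') : L.getD p' 0 ≤ L.getD p 0 := by
  rcases hpp.lt_or_eq with h | rfl
  · rcases lt_or_ge p' L.length with hp' | hp'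
    · rw [List.getD_eq_getElem _ _ hp', List.getD_eq_getElem _ _ (h.trans hp')]
      exact List.pairwise_iff_getElem.mp hL p p' (h.trans hp') hp' h
    · rw [List.getD_eq_default _ _ hp']
      exact Nat.zero_le _
  · exact le_rfl

lemma List.getD_map_div (L : List ℕ) (d p : ℕ) : (L.map (· / d)).getD p 0 = L.getD p 0 / d := by
  simpa using List.getD_map (l := L) (n := p) (d := 0) (· / d)

lemma dvd_foldr_gcd_iff {L : List ℕ} {d : ℕ} : d ∣ L.foldr Nat.gcd 0 ↔ ∀ x ∈ L, d ∣ x := by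
  induction L with
  | nil => simp
  | cons y L ih => simp [Nat.dvd_gcd_iff, ih]

lemma dimB_eq_mul_dimB_map_div {L : List ℕ} {d : ℕ} (hL : ∀ x ∈ L, d ∣ x) :
    dimB L = d * dimB (L.map (· / d)) := by
  rw [dimB, dimB, List.length_map, Finset.mul_sum]
  refine Finset.sum_congr rfl fun p hp => ?_
  have hp : p < L.length := Finset.mem_range.mp hp
  rw [List.getD_map_div, List.getD_eq_getElem _ _ hp, Nat.mul_left_comm,
    Nat.mul_div_cancel' (hL _ (List.getElem_mem hp))]

section Tableau

variable {L : List ℕ} {n : ℕ} {σ : ℕ → ℕ × ℕ}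

lemma mem_cells_of_le {p c c' : ℕ} (h : (p, c) ∈ cells L) (hc : c' ≤ c) : (p, c') ∈ cells L :=
  ⟨h.1, hc.trans_lt h.2⟩

lemma IsTab.mem_cells (h : IsTab L n σ) {i : ℕ} (hi : i ∈ Set.Icc 1 n) : σ i ∈ cells L :=
  h.2.1 ▸ Set.mem_image_of_mem σ hi

lemma IsTab.exists_eq (h : IsTab L n σ) {c : ℕ × ℕ} (hc : c ∈ cells L) :
    ∃ i ∈ Set.Icc 1 n, σ i = c := by
  rwa [← h.2.1] at hc

noncomputable def label (n : ℕ) (σ : ℕ → ℕ × ℕ) (c : ℕ × ℕ) : ℕ :=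
  Function.invFunOn σ (Set.Icc 1 n) c

lemma IsTab.label_mem (h : IsTab L n σ) {c : ℕ × ℕ} (hc : c ∈ cells L) :
    label n σ c ∈ Set.Icc 1 n :=
  (Function.invFunOn_pos (h.exists_eq hc)).1

lemma IsTab.apply_label (h : IsTab L n σ) {c : ℕ × ℕ} (hc : c ∈ cells L) : σ (label n σ c) = c :=
  (Function.invFunOn_pos (h.exists_eq hc)).2

lemma IsTab.label_apply (h : IsTab L n σ) {i : ℕ} (hi : i ∈ Set.Icc 1 n) : label n σ (σ i) = i :=
  h.1.leftInvOn_invFunOn hi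

lemma IsRST.lt_of_col_lt (h : IsRST L n σ) {i j : ℕ} (hi : i ∈ Set.Icc 1 n)
    (hj : j ∈ Set.Icc 1 n) (hrow : (σ j).1 = (σ i).1) (hcol : (σ i).2 < (σ j).2) : i < j := by
  obtain ⟨k, hk⟩ := Nat.exists_eq_add_of_lt hcol
  induction k generalizing j with
  | zero => exact h.2 i j hi hj hrow hk
  | succ k ih =>
    have hcell : ((σ i).1, (σ i).2 + k + 1) ∈ cells L :=
      mem_cells_of_le (c := (σ j).2) (by simpa [← hrow] using h.1.mem_cells hj) (by omega)
    obtain ⟨l, hl, hσl⟩ := h.1.exists_eq hcell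
    have hil : i < l := ih hl (by rw [hσl]) (by rw [hσl]; omega) (by rw [hσl])
    have hlj : l < j := h.2 l j hl hj (by rw [hσl, hrow]) (by rw [hσl, hk]; rfl)
    omega

lemma IsRST.le_of_col_le (h : IsRST L n σ) {i j : ℕ} (hi : i ∈ Set.Icc 1 n)
    (hj : j ∈ Set.Icc 1 n) (hrow : (σ j).1 = (σ i).1) (hcol : (σ i).2 ≤ (σ j).2) : i ≤ j := by
  rcases hcol.lt_or_eq with hlt | heq
  · exact (h.lt_of_col_lt hi hj hrow hlt).le
  · exact (h.1.1 hi hj (Prod.ext hrow.symm heq)).le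

lemma cells_finite (L : List ℕ) : (cells L).Finite :=
  ((Set.finite_Iio L.length).prod (Set.finite_Iio (L.sum + 1))).subset fun ⟨p, c⟩ ⟨hp, hc⟩ =>
    ⟨hp, Nat.lt_succ_of_le (hc.le.trans (by
      rw [List.getD_eq_getElem _ _ hp]; exact List.le_sum_of_mem (List.getElem_mem hp)))⟩

lemma finite_setOf_isTab (L : List ℕ) (n : ℕ) : {σ : ℕ → ℕ × ℕ | IsTab L n σ}.Finite := by
  let restrict (σ : ℕ → ℕ × ℕ) (k : Fin (n + 1)) : ℕ × ℕ := σ k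
  refine Set.Finite.of_finite_image (f := restrict) ?_ fun σ hσ σ' hσ' h => funext fun i => ?_
  · refine (Set.Finite.pi fun _ => (cells_finite L).insert (0, 0)).subset ?_
    rintro _ ⟨σ, hσ, rfl⟩ k -
    by_cases hk : (k : ℕ) ∈ Set.Icc 1 n
    · exact Or.inr (hσ.mem_cells hk)
    · exact Or.inl (hσ.2.2 k hk)
  · by_cases hi : i ∈ Set.Icc 1 n
    · exact congrFun h ⟨i, Nat.lt_succ_of_le hi.2⟩
    · rw [hσ.2.2 i hi, hσ'.2.2 i hi]

end Tableau

section SpringerPairs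

variable {L : List ℕ} {n : ℕ} {σ : ℕ → ℕ × ℕ} {i j j' : ℕ}

def sameColumnPairs (n : ℕ) (σ : ℕ → ℕ × ℕ) : Set (ℕ × ℕ) :=
  {x | 1 ≤ x.2 ∧ x.2 < x.1 ∧ x.1 ≤ n ∧ (σ x.2).2 = (σ x.1).2 ∧ (σ x.2).1 ≠ (σ x.1).1}

lemma mem_sameColumnPairs {k : ℕ} : (i, k) ∈ sameColumnPairs n σ ↔
    1 ≤ k ∧ k < i ∧ i ≤ n ∧ (σ k).2 = (σ i).2 ∧ (σ k).1 ≠ (σ i).1 :=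
  Iff.rfl

lemma SpringerPair.left_mem (h : SpringerPair n σ i j) : i ∈ Set.Icc 1 n :=
  ⟨by have := h.1; have := h.2.1; omega, h.2.2.1⟩

lemma SpringerPair.right_mem (h : SpringerPair n σ i j) : j ∈ Set.Icc 1 n :=
  ⟨h.1, by have := h.2.1; have := h.2.2.1; omega⟩

lemma SpringerPair.row_ne (hσ : IsRST L n σ) (h : SpringerPair n σ i j) :
    (σ j).1 ≠ (σ i).1 := fun hrow =>
  (hσ.le_of_col_le h.left_mem h.right_mem hrow h.2.2.2.1).not_gt h.2.1

lemma SpringerPair.not_col_lt (hσ : IsRST L n σ) (h : SpringerPair n σ i j)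
    (h' : SpringerPair n σ i j') (hrow : (σ j').1 = (σ j).1) : ¬ (σ j).2 < (σ j').2 := by
  intro hcol
  have hcell : ((σ j).1, (σ j).2 + 1) ∈ cells L :=
    mem_cells_of_le (c := (σ j').2) (by simpa [← hrow] using hσ.1.mem_cells h'.right_mem) hcol
  obtain ⟨r, hr, hσr⟩ := hσ.1.exists_eq hcell
  have hir : i < r := h.2.2.2.2 r hr hσr
  have hrj' : r ≤ j' :=
    hσ.le_of_col_le hr h'.right_mem (by rw [hσr, hrow]) (by rw [hσr]; exact hcol)
  have := h'.2.1
  omega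

lemma SpringerPair.eq_of_row_eq (hσ : IsRST L n σ) (h : SpringerPair n σ i j)
    (h' : SpringerPair n σ i j') (hrow : (σ j').1 = (σ j).1) : j = j' := by
  rcases lt_trichotomy (σ j).2 (σ j').2 with hlt | heq | hgt
  · exact absurd hlt (h.not_col_lt hσ h' hrow)
  · exact hσ.1.1 h.right_mem h'.right_mem (Prod.ext hrow.symm heq)
  · exact absurd hgt (h'.not_col_lt hσ h hrow.symm)

lemma SpringerPair.mem_cells (hσ : IsRST L n σ) (h : SpringerPair n σ i j) :
    ((σ j).1, (σ i).2) ∈ cells L :=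
  mem_cells_of_le (hσ.1.mem_cells h.right_mem) h.2.2.2.1

lemma SpringerPair.mem_sameColumnPairs (hσ : IsRST L n σ) (h : SpringerPair n σ i j) :
    (i, label n σ ((σ j).1, (σ i).2)) ∈ sameColumnPairs n σ := by
  have hk := hσ.1.label_mem (h.mem_cells hσ)
  have hσk := hσ.1.apply_label (h.mem_cells hσ)
  have hkj : label n σ ((σ j).1, (σ i).2) ≤ j :=
    hσ.le_of_col_le hk h.right_mem (by rw [hσk]) (by rw [hσk]; exact h.2.2.2.1)
  exact ⟨hk.1, hkj.trans_lt h.2.1, h.2.2.1, by rw [hσk], by rw [hσk]; exact h.row_ne hσ⟩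

/-- The partner is the rightmost box of the row of `k` with a label less than `i`. -/
lemma exists_springerPair_of_mem_sameColumnPairs (hσ : IsRST L n σ) {k : ℕ}
    (hx : (i, k) ∈ sameColumnPairs n σ) : ∃ j, SpringerPair n σ i j ∧ (σ j).1 = (σ k).1 := by
  obtain ⟨hk1, hki, hin, hcol, hrow⟩ := mem_sameColumnPairs.mp hx
  have hk : k ∈ Set.Icc 1 n := ⟨hk1, by omega⟩
  set p := (σ k).1
  let P c := (p, c) ∈ cells L ∧ label n σ (p, c) < i
  have hPk : P (σ k).2 := ⟨hσ.1.mem_cells hk, by rwa [hσ.1.label_apply hk]⟩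
  have hbound : (σ k).2 ≤ L.getD p 0 := (hσ.1.mem_cells hk).2.le
  set c := Nat.findGreatest P (L.getD p 0)
  obtain ⟨hcP, hlabc⟩ := Nat.findGreatest_spec hbound hPk
  have hσj := hσ.1.apply_label hcP
  refine ⟨label n σ (p, c), ⟨(hσ.1.label_mem hcP).1, hlabc, hin, ?_, fun r hr hσr => ?_⟩,
    by rw [hσj]⟩
  · rw [hσj, ← hcol]
    exact Nat.le_findGreatest hbound hPk
  · rw [hσj] at hσr
    have hr_cell : (p, c + 1) ∈ cells L := hσr ▸ hσ.1.mem_cells hr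
    have hnotP : ¬ P (c + 1) := Nat.findGreatest_is_greatest (Nat.lt_succ_self c) hr_cell.2.le
    have hlabr : label n σ (p, c + 1) = r := by rw [← hσr]; exact hσ.1.label_apply hr
    have hri : r ≠ i := fun hri => hrow (by rw [← hri, hσr])
    have : ¬ r < i := fun hlt => hnotP ⟨hr_cell, hlabr ▸ hlt⟩
    omega

lemma pairsCount_eq_ncard_sameColumnPairs (hσ : IsRST L n σ) :
    pairsCount n σ = (sameColumnPairs n σ).ncard := by
  refine Set.ncard_congr (fun x _ => (x.1, label n σ ((σ x.2).1, (σ x.1).2)))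
    (fun _ h => SpringerPair.mem_sameColumnPairs hσ h) ?_ ?_
  · rintro ⟨i, j⟩ ⟨i', j'⟩ h h' heq
    obtain ⟨rfl, hlab⟩ := Prod.mk.inj heq
    have hrow := congrArg Prod.fst (congrArg σ hlab)
    simp only [hσ.1.apply_label (SpringerPair.mem_cells hσ h),
      hσ.1.apply_label (SpringerPair.mem_cells hσ h')] at hrow
    exact Prod.ext rfl (SpringerPair.eq_of_row_eq hσ h h' hrow.symm)
  · rintro ⟨i, k⟩ hx
    obtain ⟨j, hj, hrow⟩ := exists_springerPair_of_mem_sameColumnPairs hσ hx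
    obtain ⟨hk1, hki, hin, hcol, -⟩ := mem_sameColumnPairs.mp hx
    refine ⟨(i, j), hj, Prod.ext rfl ?_⟩
    show label n σ ((σ j).1, (σ i).2) = k
    rw [hrow, ← hcol]
    exact hσ.1.label_apply ⟨hk1, by omega⟩

/-- The triples `⟨p', p, q⟩` with `p < p'` and `q < λ_{p'}`, each recording the two boxes `(p, q)`
and `(p', q)` of a column. -/
def columnPairCodes (L : List ℕ) : Finset (Σ _ : ℕ, ℕ × ℕ) :=
  (Finset.range L.length).sigma fun p' => Finset.range p' ×ˢ Finset.range (L.getD p' 0)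

lemma card_columnPairCodes (L : List ℕ) : (columnPairCodes L).card = dimB L := by
  simp [columnPairCodes, dimB, Finset.card_sigma]

def columnPairCode (σ : ℕ → ℕ × ℕ) (x : ℕ × ℕ) : Σ _ : ℕ, ℕ × ℕ :=
  ⟨max (σ x.1).1 (σ x.2).1, (min (σ x.1).1 (σ x.2).1, (σ x.1).2)⟩

lemma injOn_columnPairCode (hσ : IsTab L n σ) :
    Set.InjOn (columnPairCode σ) (sameColumnPairs n σ) := by
  rintro ⟨i, k⟩ hx ⟨i', k'⟩ hx' heq
  obtain ⟨hk1, hki, hin, hcol, hrow⟩ := mem_sameColumnPairs.mp hx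
  obtain ⟨hk1', hki', hin', hcol', hrow'⟩ := mem_sameColumnPairs.mp hx'
  simp only [columnPairCode, Sigma.mk.injEq, heq_eq_eq, Prod.mk.injEq] at heq
  obtain ⟨hmax, hmin, hc⟩ := heq
  have hcells : ∀ {a b}, a ∈ Set.Icc 1 n → b ∈ Set.Icc 1 n → (σ a).1 = (σ b).1 →
      (σ a).2 = (σ b).2 → a = b := fun ha hb hr hc => hσ.1 ha hb (Prod.ext hr hc)
  have hmi : i ∈ Set.Icc 1 n := ⟨by omega, hin⟩
  have hmk : k ∈ Set.Icc 1 n := ⟨hk1, by omega⟩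
  have hmi' : i' ∈ Set.Icc 1 n := ⟨by omega, hin'⟩
  have hmk' : k' ∈ Set.Icc 1 n := ⟨hk1', by omega⟩
  rcases (by omega : ((σ i).1 = (σ i').1 ∧ (σ k).1 = (σ k').1) ∨
      ((σ i).1 = (σ k').1 ∧ (σ k).1 = (σ i').1)) with ⟨h1, h2⟩ | ⟨h1, h2⟩
  · exact Prod.ext (hcells hmi hmi' h1 hc) (hcells hmk hmk' h2 (by rw [hcol, hcol', hc]))
  · have := hcells hmi hmk' h1 (by rw [hcol', hc])
    have := hcells hmk hmi' h2 (by rw [hcol, hc])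
    omega

lemma ncard_sameColumnPairs (hσ : IsTab L n σ) (hL : L.Pairwise (· ≥ ·)) :
    (sameColumnPairs n σ).ncard = dimB L := by
  rw [← card_columnPairCodes, ← Set.ncard_coe_finset]
  refine Set.ncard_congr (fun x _ => columnPairCode σ x) ?_
    (fun _ _ hx hx' => injOn_columnPairCode hσ hx hx') ?_
  · rintro ⟨i, k⟩ hx
    obtain ⟨hk1, hki, hin, hcol, hrow⟩ := mem_sameColumnPairs.mp hx
    obtain ⟨hi1, hi2⟩ := hσ.mem_cells (i := i) ⟨by omega, hin⟩
    obtain ⟨hk1, hk2⟩ := hσ.mem_cells (i := k) ⟨hk1, by omega⟩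
    simp only [columnPairCodes, columnPairCode, Finset.coe_sigma, Set.mem_sigma_iff,
      Finset.coe_range, Set.mem_Iio, Finset.coe_product, Set.mem_prod]
    rw [hcol] at hk2
    refine ⟨max_lt hi1 hk1, by omega, ?_⟩
    rcases le_total (σ i).1 (σ k).1 with h | h
    · rwa [max_eq_right h]
    · rwa [max_eq_left h]
  · rintro ⟨p', p, q⟩ hx
    simp only [columnPairCodes, Finset.coe_sigma, Set.mem_sigma_iff, Finset.coe_range, Set.mem_Iio,
      Finset.coe_product, Set.mem_prod] at hx
    obtain ⟨hp', hp, hq⟩ := hx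
    obtain ⟨a, ha, hσa⟩ := hσ.exists_eq (c := (p, q))
      ⟨hp.trans hp', hq.trans_le (hL.getD_le_getD hp.le)⟩
    obtain ⟨b, hb, hσb⟩ := hσ.exists_eq (c := (p', q)) ⟨hp', hq⟩
    have hab : a ≠ b := fun h => by subst h; rw [hσa] at hσb; simp at hσb; omega
    rcases hab.lt_or_gt with h | h
    · refine ⟨(b, a), ⟨ha.1, h, hb.2, by rw [hσa, hσb], by rw [hσa, hσb]; simp; omega⟩, ?_⟩
      simp [columnPairCode, hσa, hσb, hp.le]
    · refine ⟨(a, b), ⟨hb.1, h, ha.2, by rw [hσa, hσb], by rw [hσa, hσb]; simp; omega⟩, ?_⟩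
      simp [columnPairCode, hσa, hσb, hp.le]

theorem pairsCount_eq_dimB (hσ : IsRST L n σ) (hL : L.Pairwise (· ≥ ·)) :
    pairsCount n σ = dimB L := by
  rw [pairsCount_eq_ncard_sameColumnPairs hσ, ncard_sameColumnPairs hσ.1 hL]

end SpringerPairs

section TabDivisor

variable {L : List ℕ} {n d m : ℕ} {σ : ℕ → ℕ × ℕ} {i j : ℕ}

lemma TabDivisor.one (n : ℕ) (σ : ℕ → ℕ × ℕ) : TabDivisor n 1 σ :=
  ⟨one_dvd n, fun i _ _ hi => absurd (one_dvd i) hi⟩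

lemma TabDivisor.succ (hd : TabDivisor n d σ) {i : ℕ} (hi : i ∈ Set.Icc 1 n) (hdi : ¬ d ∣ i) :
    i + 1 ∈ Set.Icc 1 n ∧ σ (i + 1) = ((σ i).1, (σ i).2 + 1) := by
  have hin : i < n := hi.2.lt_of_ne fun h => hdi (h ▸ hd.1)
  exact ⟨⟨by omega, hin⟩, hd.2 i hi.1 hin hdi⟩

lemma TabDivisor.lcm {e : ℕ} (hd : TabDivisor n d σ) (he : TabDivisor n e σ) :
    TabDivisor n (Nat.lcm d e) σ :=
  ⟨Nat.lcm_dvd hd.1 he.1, fun i hi hin hl =>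
    if hdi : d ∣ i then he.2 i hi hin fun hei => hl (Nat.lcm_dvd hdi hei) else hd.2 i hi hin hdi⟩

lemma SpringerPair.dvd_right (hd : TabDivisor n d σ) (h : SpringerPair n σ i j) : d ∣ j := by
  by_contra hdj
  obtain ⟨hj, hσj⟩ := hd.succ h.right_mem hdj
  have := h.2.2.2.2 (j + 1) hj hσj
  have := h.2.1
  omega

lemma TabDivisor.modEq_col (hσ : IsTab L n σ) (hd : TabDivisor n d σ) {i : ℕ}
    (hi : i ∈ Set.Icc 1 n) : i - 1 ≡ (σ i).2 [MOD d] := by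
  have pred : ∀ {i}, i ∈ Set.Icc 1 n → ¬ d ∣ i - 1 →
      i - 1 ∈ Set.Icc 1 n ∧ σ i = ((σ (i - 1)).1, (σ (i - 1)).2 + 1) := fun {i} hi hdi => by
    have hi1 : i - 1 ≠ 0 := fun h => hdi (h ▸ dvd_zero d)
    have hmem : i - 1 ∈ Set.Icc 1 n := ⟨by omega, by have := hi.2; omega⟩
    exact ⟨hmem, by simpa [Nat.sub_add_cancel hi.1] using (hd.succ hmem hdi).2⟩
  generalize hc : (σ i).2 = c
  induction c generalizing i with
  | zero =>
    by_cases hdi : d ∣ i - 1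
    · exact Nat.modEq_zero_iff_dvd.mpr hdi
    · simp [(pred hi hdi).2] at hc
  | succ c ih =>
    by_cases hdi : d ∣ i - 1
    · obtain ⟨j, hj, hσj⟩ := hσ.exists_eq (c := ((σ i).1, c))
        (mem_cells_of_le (c := (σ i).2) (hσ.mem_cells hi) (by omega))
      have hdj : d ∣ j := by
        by_contra hdj
        obtain ⟨hj', hσj'⟩ := hd.succ hj hdj
        have hji : j + 1 = i := hσ.1 hj' hi (by rw [hσj', hσj, ← hc])
        exact hdj (by rw [← Nat.add_sub_cancel j 1, hji]; exact hdi)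
      have := (ih hj (by rw [hσj])).add_right 1
      rw [Nat.sub_add_cancel hj.1] at this
      exact ((Nat.modEq_zero_iff_dvd.mpr hdi).trans
        (Nat.modEq_zero_iff_dvd.mpr hdj).symm).trans this
    · obtain ⟨hi', hσi⟩ := pred hi hdi
      have := (ih hi' (by rw [hσi] at hc; simpa using hc)).add_right 1
      rwa [Nat.sub_add_cancel hi'.1] at this

lemma TabDivisor.apply_block (hd : TabDivisor (d * m) d σ) {q s : ℕ} (hq : q < m) (hs : s < d) :
    σ (d * q + s + 1) = ((σ (d * q + 1)).1, (σ (d * q + 1)).2 + s) := by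
  induction s with
  | zero => rfl
  | succ s ih =>
    have hdvd : ¬ d ∣ d * q + (s + 1) := fun h =>
      absurd (Nat.le_of_dvd (Nat.succ_pos s) ((Nat.dvd_add_right (dvd_mul_right d q)).mp h))
        (by omega)
    rw [← Nat.add_assoc] at hdvd
    rw [← Nat.add_assoc, hd.2 _ (by omega) (by have := Nat.mul_add_succ_le_mul hs hq; omega) hdvd,
      ih (by omega)]
    rfl

end TabDivisor

section Inflate

variable {L : List ℕ} {d m : ℕ} {σ τ : ℕ → ℕ × ℕ}

/-- The box `a` of `τ` is replaced by the `d` boxes labelled `d (a - 1) + 1, …, d a`, in this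
order along its row. -/
def inflate (d m : ℕ) (τ : ℕ → ℕ × ℕ) : ℕ → ℕ × ℕ := fun i =>
  if i ∈ Set.Icc 1 (d * m) then
    ((τ ((i - 1) / d + 1)).1, d * (τ ((i - 1) / d + 1)).2 + (i - 1) % d)
  else (0, 0)

lemma exists_eq_mul_add_succ (hd : 0 < d) {i : ℕ} (hi : i ∈ Set.Icc 1 (d * m)) :
    ∃ q < m, ∃ s < d, i = d * q + s + 1 := by
  refine ⟨(i - 1) / d, ?_, (i - 1) % d, Nat.mod_lt _ hd, ?_⟩
  · rw [Nat.div_lt_iff_lt_mul hd, Nat.mul_comm]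
    have := hi.2
    have := hi.1
    omega
  · have := Nat.div_add_mod (i - 1) d
    have := hi.1
    omega

lemma inflate_apply {q s : ℕ} (hs : s < d) (hq : q < m) :
    inflate d m τ (d * q + s + 1) = ((τ (q + 1)).1, d * (τ (q + 1)).2 + s) := by
  have hd : 0 < d := hs.trans_le' (Nat.zero_le _)
  rw [inflate, if_pos ⟨by omega, Nat.mul_add_succ_le_mul hs hq⟩, Nat.add_sub_cancel,
    Nat.mul_add_div hd, Nat.div_eq_of_lt hs, Nat.mul_add_mod, Nat.mod_eq_of_lt hs, Nat.add_zero]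

lemma inflate_apply_last (hd : 0 < d) {q : ℕ} (hq : q < m) :
    inflate d m τ (d * (q + 1)) = ((τ (q + 1)).1, d * (τ (q + 1)).2 + (d - 1)) := by
  rw [← Nat.mul_add_sub_one_add_one hd, inflate_apply (Nat.sub_lt hd one_pos) hq]

lemma inflate_of_notMem {i : ℕ} (hi : i ∉ Set.Icc 1 (d * m)) : inflate d m τ i = (0, 0) :=
  if_neg hi

lemma quotTab_of_notMem (hd : 0 < d) (hσ : ∀ i ∉ Set.Icc 1 (d * m), σ i = (0, 0)) :
    ∀ a ∉ Set.Icc 1 m, quotTab d σ a = (0, 0) := by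
  intro a ha
  have hda : d * a ∉ Set.Icc 1 (d * m) := by
    simp only [Set.mem_Icc, not_and_or, not_le] at ha ⊢
    rcases ha with ha | ha
    · left; simp [Nat.lt_one_iff.mp ha]
    · right; exact Nat.mul_lt_mul_of_pos_left ha hd
  have : 1 / d ≤ 1 := Nat.div_le_self 1 d
  simp [quotTab, hσ _ hda]
  omega

lemma quotTab_inflate (hd : 0 < d) (hτ : ∀ a ∉ Set.Icc 1 m, τ a = (0, 0)) :
    quotTab d (inflate d m τ) = τ := by
  funext a
  by_cases ha : a ∈ Set.Icc 1 m
  · obtain ⟨q, rfl⟩ := Nat.exists_eq_add_of_le' ha.1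
    rw [quotTab, inflate_apply_last hd (by have := ha.2; omega), Nat.mul_add_sub_one_add_one hd,
      Nat.mul_div_cancel_left _ hd, Nat.add_sub_cancel]
  · rw [quotTab_of_notMem hd (fun _ => inflate_of_notMem) a ha, hτ a ha]

lemma TabDivisor.inflate_quotTab (hσ : IsTab L (d * m) σ) (hd : TabDivisor (d * m) d σ)
    (hd0 : 0 < d) : inflate d m (quotTab d σ) = σ := by
  funext i
  by_cases hi : i ∈ Set.Icc 1 (d * m)
  · obtain ⟨q, hq, s, hs, rfl⟩ := exists_eq_mul_add_succ hd0 hi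
    obtain ⟨C, hC⟩ : d ∣ (σ (d * q + 1)).2 := by
      have := hd.modEq_col hσ (i := d * q + 1) ⟨by omega, Nat.mul_add_succ_le_mul hd0 hq⟩
      rw [Nat.add_sub_cancel] at this
      exact Nat.modEq_zero_iff_dvd.mp
        (this.symm.trans (Nat.modEq_zero_iff_dvd.mpr (dvd_mul_right d q)))
    have hlast : σ (d * (q + 1)) = ((σ (d * q + 1)).1, d * C + (d - 1)) := by
      rw [← Nat.mul_add_sub_one_add_one hd0, hd.apply_block hq (by omega), hC]
    rw [inflate_apply hs hq, hd.apply_block hq hs, quotTab, hlast, hC,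
      Nat.mul_add_sub_one_add_one hd0,
      Nat.mul_div_cancel_left _ hd0, Nat.add_sub_cancel]
  · rw [inflate_of_notMem hi, hσ.2.2 i hi]

lemma inflate_succ_of_succ_lt {q s : ℕ} (hs : s + 1 < d) (hq : q < m) :
    inflate d m τ (d * q + s + 1 + 1) =
      ((inflate d m τ (d * q + s + 1)).1, (inflate d m τ (d * q + s + 1)).2 + 1) := by
  have h := inflate_apply (τ := τ) hs hq
  rw [← Nat.add_assoc] at h
  rw [h, inflate_apply (Nat.lt_of_succ_lt hs) hq]
  rfl

lemma inflate_succ_eq_iff (hd : 0 < d) {q : ℕ} (hq : q + 1 < m) :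
    inflate d m τ (d * (q + 1) + 1) =
        ((inflate d m τ (d * (q + 1))).1, (inflate d m τ (d * (q + 1))).2 + 1) ↔
      τ (q + 1 + 1) = ((τ (q + 1)).1, (τ (q + 1)).2 + 1) := by
  have hfirst := inflate_apply (τ := τ) hd hq
  rw [Nat.add_zero, Nat.add_zero] at hfirst
  rw [hfirst, inflate_apply_last hd (Nat.lt_of_succ_lt hq), Nat.mul_add_sub_one_add_one hd,
    Prod.ext_iff, Prod.ext_iff]
  simp only [Nat.add_zero, Nat.mul_left_cancel_iff hd]

lemma tabDivisor_mul_inflate_iff (hd : 0 < d) {e : ℕ} :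
    TabDivisor (d * m) (e * d) (inflate d m τ) ↔ TabDivisor m e τ := by
  have hdvd : ∀ a, e * d ∣ d * a ↔ e ∣ a := fun a => by
    rw [Nat.mul_comm e d]; exact Nat.mul_dvd_mul_iff_left hd
  refine ⟨fun h => ⟨(hdvd m).mp h.1, fun a ha1 ham hea => ?_⟩,
    fun h => ⟨(hdvd m).mpr h.1, fun i hi1 him hei => ?_⟩⟩
  · obtain ⟨q, rfl⟩ := Nat.exists_eq_add_of_le' ha1
    refine (inflate_succ_eq_iff hd ham).mp (h.2 _ ?_ ?_ (mt (hdvd _).mp hea))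
    · exact Nat.mul_pos hd (Nat.succ_pos q)
    · exact Nat.mul_lt_mul_of_pos_left ham hd
  · obtain ⟨q, hq, s, hs, rfl⟩ := exists_eq_mul_add_succ hd ⟨hi1, him.le⟩
    rcases (Nat.lt_or_ge (s + 1) d) with hs1 | hs1
    · exact inflate_succ_of_succ_lt hs1 hq
    · have hlast : d * q + s + 1 = d * (q + 1) := by rw [Nat.mul_succ]; omega
      rw [hlast] at him hei ⊢
      have hqm : q + 1 < m := (Nat.mul_lt_mul_left hd).mp him
      exact (inflate_succ_eq_iff hd hqm).mpr (h.2 _ (Nat.succ_pos q) hqm (mt (hdvd _).mpr hei))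

lemma tabDivisor_inflate (hd : 0 < d) : TabDivisor (d * m) d (inflate d m τ) := by
  simpa using (tabDivisor_mul_inflate_iff (τ := τ) (m := m) hd (e := 1)).mpr (TabDivisor.one m τ)

lemma injOn_inflate_iff (hd : 0 < d) :
    Set.InjOn (inflate d m τ) (Set.Icc 1 (d * m)) ↔ Set.InjOn τ (Set.Icc 1 m) := by
  constructor
  · intro h a ha b hb hab
    obtain ⟨q, rfl⟩ := Nat.exists_eq_add_of_le' ha.1
    obtain ⟨q', rfl⟩ := Nat.exists_eq_add_of_le' hb.1
    have hq : q < m := by have := ha.2; omega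
    have hq' : q' < m := by have := hb.2; omega
    have := h ⟨by omega, Nat.mul_add_succ_le_mul hd hq⟩ ⟨by omega, Nat.mul_add_succ_le_mul hd hq'⟩
      (by rw [inflate_apply hd hq, inflate_apply hd hq', hab])
    simpa using Nat.eq_of_mul_eq_mul_left hd (by simpa using this)
  · intro h i hi j hj hij
    obtain ⟨q, hq, s, hs, rfl⟩ := exists_eq_mul_add_succ hd hi
    obtain ⟨q', hq', s', hs', rfl⟩ := exists_eq_mul_add_succ hd hj
    rw [inflate_apply hs hq, inflate_apply hs' hq', Prod.ext_iff,
      Nat.mul_add_eq_mul_add_iff hs hs'] at hij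
    obtain ⟨hrow, hcol, rfl⟩ := hij
    have := h ⟨by omega, by omega⟩ ⟨by omega, by omega⟩ (Prod.ext hrow hcol)
    rw [Nat.add_right_cancel this]

lemma image_inflate (hd : 0 < d) :
    inflate d m τ '' Set.Icc 1 (d * m) = Prod.map id (· / d) ⁻¹' (τ '' Set.Icc 1 m) := by
  ext c
  simp only [Set.mem_image, Set.mem_preimage]
  constructor
  · rintro ⟨i, hi, rfl⟩
    obtain ⟨q, hq, s, hs, rfl⟩ := exists_eq_mul_add_succ hd hi
    refine ⟨q + 1, ⟨by omega, by omega⟩, ?_⟩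
    rw [inflate_apply hs hq, Prod.map_apply, id, Nat.mul_add_div hd, Nat.div_eq_of_lt hs,
      Nat.add_zero]
    rfl
  · rintro ⟨a, ha, hτa⟩
    obtain ⟨q, rfl⟩ := Nat.exists_eq_add_of_le' ha.1
    have hq : q < m := by have := ha.2; omega
    refine ⟨d * q + c.2 % d + 1, ⟨by omega, Nat.mul_add_succ_le_mul (Nat.mod_lt _ hd) hq⟩, ?_⟩
    rw [inflate_apply (Nat.mod_lt _ hd) hq, hτa, Prod.map_fst, Prod.map_snd, id, Nat.div_add_mod]

lemma cells_eq_preimage (hL : ∀ x ∈ L, d ∣ x) :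
    cells L = Prod.map id (· / d) ⁻¹' cells (L.map (· / d)) := by
  ext ⟨p, c⟩
  simp only [cells, Set.mem_preimage, Prod.map_apply, id, Set.mem_ofPred_eq, List.length_map]
  refine and_congr_right fun hp => ?_
  rw [List.getD_map_div]
  have hdvd : d ∣ L.getD p 0 := hL _ (List.getD_eq_getElem _ _ hp ▸ List.getElem_mem hp)
  exact ⟨Nat.div_lt_div_of_lt_of_dvd hdvd, fun h => lt_of_not_ge fun h' =>
    (Nat.div_le_div_right h').not_gt h⟩

lemma dvd_of_cells_eq_preimage (hd : 0 < d) {S : Set (ℕ × ℕ)}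
    (h : cells L = Prod.map id (· / d) ⁻¹' S) : ∀ x ∈ L, d ∣ x := by
  intro x hx
  obtain ⟨p, hp, rfl⟩ := List.getElem_of_mem hx
  rcases Nat.eq_zero_or_pos L[p] with h0 | hpos
  · rw [h0]; exact dvd_zero d
  have hmem : (p, L[p] - 1) ∈ cells L := ⟨hp, by rw [List.getD_eq_getElem _ _ hp]; omega⟩
  have hlast : (p, d * ((L[p] - 1) / d) + (d - 1)) ∈ cells L := by
    rw [h] at hmem ⊢
    simpa [Nat.mul_add_div hd, Nat.div_eq_of_lt (Nat.sub_lt hd one_pos)] using hmem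
  have hlt : d * ((L[p] - 1) / d) + (d - 1) < L[p] := by
    have := hlast.2
    rwa [List.getD_eq_getElem _ _ hp] at this
  have := Nat.div_add_mod (L[p] - 1) d
  have := Nat.mod_lt (L[p] - 1) hd
  exact ⟨(L[p] - 1) / d + 1, by rw [Nat.mul_succ]; omega⟩

lemma rowStrict_inflate_iff (hd : 0 < d) (hτ : Set.InjOn τ (Set.Icc 1 m)) :
    RowStrict (d * m) (inflate d m τ) ↔ RowStrict m τ := by
  constructor
  · intro h a b ha hb hrow hcol
    obtain ⟨q, rfl⟩ := Nat.exists_eq_add_of_le' ha.1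
    obtain ⟨q', rfl⟩ := Nat.exists_eq_add_of_le' hb.1
    have hq : q < m := by have := ha.2; omega
    have hq' : q' < m := by have := hb.2; omega
    have := h (d * (q + 1)) (d * q' + 0 + 1)
      ⟨Nat.mul_pos hd (Nat.succ_pos q), Nat.mul_le_mul_left d ha.2⟩
      ⟨by omega, Nat.mul_add_succ_le_mul hd hq'⟩
      (by rw [inflate_apply_last hd hq, inflate_apply hd hq', hrow])
      (by rw [inflate_apply_last hd hq, inflate_apply hd hq', hcol, Nat.mul_succ]; omega)
    have : d * (q + 1) ≤ d * q' := by omega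
    have := Nat.le_of_mul_le_mul_left this hd
    omega
  · intro h i j hi hj hrow hcol
    obtain ⟨q, hq, s, hs, rfl⟩ := exists_eq_mul_add_succ hd hi
    obtain ⟨q', hq', s', hs', rfl⟩ := exists_eq_mul_add_succ hd hj
    rw [inflate_apply hs hq, inflate_apply hs' hq'] at hrow hcol
    simp only at hrow hcol
    rcases Nat.lt_or_ge (s + 1) d with hs1 | hs1
    · rw [Nat.add_assoc, Nat.mul_add_eq_mul_add_iff hs' hs1] at hcol
      obtain rfl : q' = q := by
        have := hτ ⟨by omega, by omega⟩ ⟨by omega, by omega⟩ (Prod.ext hrow hcol.1)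
        omega
      omega
    · rw [show d * (τ (q + 1)).2 + s + 1 = d * ((τ (q + 1)).2 + 1) + 0 by rw [Nat.mul_succ]; omega,
        Nat.mul_add_eq_mul_add_iff hs' hd] at hcol
      have hlt := h (q + 1) (q' + 1) ⟨by omega, by omega⟩ ⟨by omega, by omega⟩ hrow hcol.1
      have : d * (q + 1) ≤ d * q' := Nat.mul_le_mul_left d (by omega)
      rw [Nat.mul_succ] at this
      omega

theorem isRST_inflate_iff (hd : 0 < d) (hτ : ∀ a ∉ Set.Icc 1 m, τ a = (0, 0)) :
    IsRST L (d * m) (inflate d m τ) ↔ (∀ x ∈ L, d ∣ x) ∧ IsRST (L.map (· / d)) m τ := by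
  have hsurj : Function.Surjective (Prod.map id (· / d) : ℕ × ℕ → ℕ × ℕ) :=
    Function.Surjective.prodMap Function.surjective_id fun C =>
      ⟨d * C, Nat.mul_div_cancel_left C hd⟩
  constructor
  · rintro ⟨⟨hinj, himg, -⟩, hrs⟩
    rw [image_inflate hd] at himg
    have hL := dvd_of_cells_eq_preimage hd himg.symm
    have hinj' := (injOn_inflate_iff hd).mp hinj
    refine ⟨hL, ⟨hinj', Set.preimage_injective.mpr hsurj ?_, hτ⟩,
      (rowStrict_inflate_iff hd hinj').mp hrs⟩
    rw [himg, cells_eq_preimage hL]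
  · rintro ⟨hL, ⟨hinj, himg, -⟩, hrs⟩
    refine ⟨⟨(injOn_inflate_iff hd).mpr hinj, ?_, fun _ => inflate_of_notMem⟩,
      (rowStrict_inflate_iff hd hinj).mpr hrs⟩
    rw [image_inflate hd, himg, cells_eq_preimage hL]

end Inflate

section MaxDivisor

variable {L : List ℕ} {n d m : ℕ} {σ τ : ℕ → ℕ × ℕ}

/-- The maximal divisor `d_σ` (junk value `0` when `n = 0`). -/
noncomputable def maxDivisor (n : ℕ) (σ : ℕ → ℕ × ℕ) : ℕ :=
  Nat.findGreatest (fun e => TabDivisor n e σ) n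

lemma tabDivisor_maxDivisor (hn : 0 < n) : TabDivisor n (maxDivisor n σ) σ :=
  Nat.findGreatest_spec (P := fun e => TabDivisor n e σ) hn (TabDivisor.one n σ)

lemma maxDivisor_pos (hn : 0 < n) : 0 < maxDivisor n σ :=
  Nat.le_findGreatest (P := fun e => TabDivisor n e σ) hn (TabDivisor.one n σ)

/-- Divisors are closed under `lcm`, so the largest one is a multiple of all the others. -/
lemma TabDivisor.dvd_maxDivisor (hn : 0 < n) {e : ℕ} (he : TabDivisor n e σ) :
    e ∣ maxDivisor n σ := by
  have hD := tabDivisor_maxDivisor (σ := σ) hn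
  have hl := he.lcm hD
  have hl0 : 0 < Nat.lcm e (maxDivisor n σ) := Nat.pos_of_dvd_of_pos hl.1 hn
  have hle : Nat.lcm e (maxDivisor n σ) ≤ maxDivisor n σ :=
    Nat.le_findGreatest (Nat.le_of_dvd hn hl.1) hl
  have hge := Nat.le_of_dvd hl0 (Nat.dvd_lcm_right e (maxDivisor n σ))
  exact (Nat.dvd_lcm_left e _).trans (le_antisymm hle hge).dvd

lemma TabDivisor.dvd_of_mem (hσ : IsRST L n σ) (hd : TabDivisor n d σ) (hd0 : 0 < d) :
    ∀ x ∈ L, d ∣ x := by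
  obtain ⟨m, rfl⟩ := hd.1
  have hτ0 := quotTab_of_notMem hd0 hσ.1.2.2
  rw [← hd.inflate_quotTab hσ.1 hd0] at hσ
  exact ((isRST_inflate_iff hd0 hτ0).mp hσ).1

lemma maxDivisor_inflate_eq_iff (hd : 0 < d) (hm : 0 < m) :
    maxDivisor (d * m) (inflate d m τ) = d ↔ ∀ e, 0 < e → TabDivisor m e τ → e = 1 := by
  have hn : 0 < d * m := Nat.mul_pos hd hm
  constructor
  · intro h e he0 he
    have := ((tabDivisor_mul_inflate_iff hd).mpr he).dvd_maxDivisor hn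
    rw [h] at this
    have := Nat.le_of_dvd hd this
    nlinarith
  · intro h
    obtain ⟨e, he⟩ := (tabDivisor_inflate (τ := τ) (m := m) hd).dvd_maxDivisor hn
    have hdiv := tabDivisor_maxDivisor (σ := inflate d m τ) hn
    rw [he, Nat.mul_comm d e, tabDivisor_mul_inflate_iff hd] at hdiv
    have he0 : 0 < e := Nat.pos_of_mul_pos_left (he ▸ maxDivisor_pos hn)
    rw [he, h e he0 hdiv, Nat.mul_one]

theorem setOf_isRST_maxDivisor_eq (hd : 0 < d) (hm : 0 < m) (hL : ∀ x ∈ L, d ∣ x) :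
    {σ | IsRST L (d * m) σ ∧ maxDivisor (d * m) σ = d} =
      inflate d m '' {τ | IsRST (L.map (· / d)) m τ ∧ ∀ e, 0 < e → TabDivisor m e τ → e = 1} := by
  ext σ
  constructor
  · rintro ⟨hσ, hmax⟩
    have hdiv := tabDivisor_maxDivisor (σ := σ) (Nat.mul_pos hd hm)
    rw [hmax] at hdiv
    have heq := hdiv.inflate_quotTab hσ.1 hd
    have hτ0 := quotTab_of_notMem hd hσ.1.2.2
    rw [← heq] at hσ hmax
    exact ⟨quotTab d σ, ⟨((isRST_inflate_iff hd hτ0).mp hσ).2,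
      (maxDivisor_inflate_eq_iff hd hm).mp hmax⟩, heq⟩
  · rintro ⟨τ, ⟨hτ, hind⟩, rfl⟩
    exact ⟨(isRST_inflate_iff hd hτ.1.2.2).mpr ⟨hL, hτ⟩, (maxDivisor_inflate_eq_iff hd hm).mpr hind⟩

end MaxDivisor

section Inversions

variable {d m : ℕ} {τ : ℕ → ℕ × ℕ}

lemma springerPair_inflate_iff {a b s : ℕ} (hs : s < d) (ha : a < m) (hb : b < m) :
    SpringerPair (d * m) (inflate d m τ) (d * a + s + 1) (d * (b + 1)) ↔
      SpringerPair m τ (a + 1) (b + 1) := by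
  have hd : 0 < d := by omega
  have hd1 : d - 1 < d := Nat.sub_lt hd one_pos
  have hright : ∀ C, d * C + (d - 1) + 1 = d * (C + 1) + 0 := Nat.mul_add_sub_one_add_one hd
  have hcol : ∀ C C', d * C + s ≤ d * C' + (d - 1) ↔ C ≤ C' := fun C C' => by
    rw [← not_lt, Nat.mul_add_lt_mul_add_iff hd1 hs]
    omega
  simp only [SpringerPair, inflate_apply hs ha, inflate_apply_last hd hb]
  rw [← Nat.mul_add_sub_one_add_one hd b, Nat.add_lt_add_iff_right,
    Nat.mul_add_lt_mul_add_iff hd1 hs, hcol, hright]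
  refine and_congr (iff_of_true (Nat.mul_pos hd b.succ_pos) (by omega)) (and_congr (by omega)
    (and_congr (iff_of_true (Nat.mul_add_succ_le_mul hs ha) (by omega)) (and_congr Iff.rfl
    ⟨fun h r hr hτr => ?_, fun h r hr hσr => ?_⟩)))
  · obtain ⟨q, rfl⟩ := Nat.exists_eq_add_of_le' hr.1
    have hq : q < m := by have := hr.2; omega
    have := h (d * q + 0 + 1) ⟨by omega, Nat.mul_add_succ_le_mul hd hq⟩
      (by rw [inflate_apply hd hq, hτr, hright])
    rw [Nat.add_lt_add_iff_right, ← Nat.add_zero (d * q), Nat.mul_add_lt_mul_add_iff hs hd] at this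
    omega
  · obtain ⟨q, hq, t, ht, rfl⟩ := exists_eq_mul_add_succ hd hr
    rw [inflate_apply ht hq, Prod.ext_iff] at hσr
    obtain ⟨hrow, hcol⟩ := hσr
    dsimp only at hrow hcol
    rw [hright, Nat.mul_add_eq_mul_add_iff ht hd] at hcol
    have := h (q + 1) ⟨by omega, by omega⟩ (Prod.ext hrow hcol.1)
    rw [Nat.add_lt_add_iff_right, Nat.mul_add_lt_mul_add_iff hs ht]
    omega

lemma springerInv_inflate_iff_of_lt {a b s : ℕ} (hs : s + 1 < d) (ha : a < m) (hb : b < m) :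
    SpringerInv (d * m) (inflate d m τ) (d * a + s + 1) (d * (b + 1)) ↔
      SpringerPair m τ (a + 1) (b + 1) := by
  have hd : 0 < d := by omega
  rw [SpringerInv, springerPair_inflate_iff (by omega) ha hb, inflate_apply (by omega) ha,
    inflate_apply_last hd hb, and_iff_left_iff_imp]
  intro _ hcol
  rw [Nat.mul_add_eq_mul_add_iff (by omega) (Nat.sub_lt hd one_pos)] at hcol
  omega

lemma springerInv_inflate_last_iff {a b : ℕ} (hd : 0 < d) (ha : a < m) (hb : b < m) :
    SpringerInv (d * m) (inflate d m τ) (d * (a + 1)) (d * (b + 1)) ↔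
      SpringerInv m τ (a + 1) (b + 1) := by
  have hd1 : d - 1 < d := Nat.sub_lt hd one_pos
  rw [SpringerInv, SpringerInv, inflate_apply_last hd ha, inflate_apply_last hd hb,
    ← Nat.mul_add_sub_one_add_one hd a,
    springerPair_inflate_iff hd1 ha hb, Nat.add_right_cancel_iff, Nat.mul_left_cancel_iff hd]

/-- Of the `d²` pairs of labels from two blocks, only those whose smaller label ends its block can
be Springer pairs; all of them are inversions except possibly the one whose larger label ends its
block too, the only one sharing a column with the smaller label. -/
lemma sum_springerInv_inflate_block (hd : 0 < d) {a b : ℕ} (ha : a < m) (hb : b < m) :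
    (∑ s ∈ Finset.range d, ∑ t ∈ Finset.range d,
        if SpringerInv (d * m) (inflate d m τ) (d * a + s + 1) (d * b + t + 1) then 1 else 0) =
      (if SpringerInv m τ (a + 1) (b + 1) then 1 else 0) +
        (d - 1) * if SpringerPair m τ (a + 1) (b + 1) then 1 else 0 := by
  have hlast : ∀ s ∈ Finset.range d, (∑ t ∈ Finset.range d,
      if SpringerInv (d * m) (inflate d m τ) (d * a + s + 1) (d * b + t + 1) then 1 else 0) =
      if SpringerInv (d * m) (inflate d m τ) (d * a + s + 1) (d * (b + 1)) then 1 else 0 := by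
    intro s _
    rw [Finset.sum_eq_single_of_mem (d - 1) (Finset.mem_range.mpr (Nat.sub_lt hd one_pos)),
      Nat.mul_add_sub_one_add_one hd]
    intro t ht hne
    rw [if_neg]
    intro hinv
    have := hinv.1.dvd_right (tabDivisor_inflate hd)
    rw [Nat.add_assoc, Nat.dvd_add_right (dvd_mul_right d b)] at this
    have := Nat.le_of_dvd (Nat.succ_pos t) this
    simp only [Finset.mem_range] at ht
    omega
  have hsplit := Finset.sum_range_succ (fun s =>
    if SpringerInv (d * m) (inflate d m τ) (d * a + s + 1) (d * (b + 1)) then 1 else 0) (d - 1)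
  rw [Nat.sub_add_cancel hd] at hsplit
  rw [Finset.sum_congr rfl hlast, hsplit, Nat.mul_add_sub_one_add_one hd,
    springerInv_inflate_last_iff hd ha hb, add_comm, Finset.sum_congr rfl fun s hs =>
      by rw [springerInv_inflate_iff_of_lt (by simp at hs; omega) ha hb],
    Finset.sum_const, Finset.card_range, smul_eq_mul]

theorem invCount_inflate (hd : 0 < d) :
    invCount (d * m) (inflate d m τ) = invCount m τ + (d - 1) * pairsCount m τ := by
  have hinv : ∀ {k ρ}, invCount k ρ = ∑ i ∈ Finset.range k, ∑ j ∈ Finset.range k,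
      if SpringerInv k ρ (i + 1) (j + 1) then 1 else 0 := fun {k ρ} =>
    ncard_setOf_eq_sum_range fun _ _ h => ⟨h.1.left_mem, h.1.right_mem⟩
  have hpairs : ∀ {k ρ}, pairsCount k ρ = ∑ i ∈ Finset.range k, ∑ j ∈ Finset.range k,
      if SpringerPair k ρ (i + 1) (j + 1) then 1 else 0 := fun {k ρ} =>
    ncard_setOf_eq_sum_range fun _ _ h => ⟨h.left_mem, h.right_mem⟩
  rw [hinv, hinv, hpairs, Finset.sum_range_mul, Finset.mul_sum, ← Finset.sum_add_distrib]
  refine Finset.sum_congr rfl fun a ha => ?_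
  simp_rw [Finset.sum_range_mul _ d m]
  rw [Finset.sum_comm, Finset.mul_sum, ← Finset.sum_add_distrib]
  exact Finset.sum_congr rfl fun b hb =>
    sum_springerInv_inflate_block hd (Finset.mem_range.mp ha) (Finset.mem_range.mp hb)

end Inversions

section Fibers

variable {L : List ℕ} {n d m : ℕ}

lemma setOf_isRST_eq_biUnion (hL : L.sum = n) (hn : 0 < n) :
    {σ | IsRST L n σ} = ⋃ d ∈ ((L.foldr Nat.gcd 0).divisors : Set ℕ),
      {σ | IsRST L n σ ∧ maxDivisor n σ = d} := by
  have hgn : L.foldr Nat.gcd 0 ∣ n := hL ▸ List.dvd_sum (dvd_foldr_gcd_iff.mp dvd_rfl)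
  have hg : L.foldr Nat.gcd 0 ≠ 0 := fun h => hn.ne' (Nat.eq_zero_of_zero_dvd (h ▸ hgn))
  ext σ
  simp only [Set.mem_ofPred_eq, Set.mem_iUnion, Finset.mem_coe, Nat.mem_divisors, exists_prop]
  refine ⟨fun hσ => ⟨maxDivisor n σ, ⟨dvd_foldr_gcd_iff.mpr ?_, hg⟩, hσ, rfl⟩,
    fun ⟨_, _, hσ, _⟩ => hσ⟩
  exact (tabDivisor_maxDivisor hn).dvd_of_mem hσ (maxDivisor_pos hn)

lemma finsum_maxDivisor_eq (hd : 0 < d) (hm : 0 < m) (hL : ∀ x ∈ L, d ∣ x)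
    (hsorted : L.Pairwise (· ≥ ·)) :
    ∑ᶠ σ ∈ {σ | IsRST L (d * m) σ ∧ maxDivisor (d * m) σ = d},
        (Polynomial.X : Polynomial ℤ) ^ invCount (d * m) σ =
      Polynomial.X ^ (dimB L - dimB (L.map (· / d))) * Qpoly (L.map (· / d)) m := by
  rw [setOf_isRST_maxDivisor_eq hd hm hL, finsum_mem_image fun τ hτ τ' hτ' h => by
      rw [← quotTab_inflate hd hτ.1.1.2.2, h, quotTab_inflate hd hτ'.1.1.2.2],
    Qpoly, mul_finsum_mem]
  refine finsum_mem_congr rfl fun τ hτ => ?_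
  rw [invCount_inflate hd, pairsCount_eq_dimB hτ.1 (hsorted.map _ fun _ _ => Nat.div_le_div_right),
    dimB_eq_mul_dimB_map_div hL, ← Nat.sub_one_mul, pow_add, mul_comm]

end Fibers

/-- `P_λ(t) = Σ_{d | λ} t^{D_{λ,d}} Q_{λ/d}(t)`, where the sum runs over the positive
integers `d` dividing every part of `λ` (the divisors of the gcd of the parts) and
`D_{λ,d} = Σ_i (i−1)λ_i − Σ_i (i−1)(λ_i/d) = ((d−1)/d)Σ_i (i−1)λ_i`. -/
theorem stmt15 (L : List ℕ) (n : ℕ) (hL : IsPartition L n) (hn : 0 < n) :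
    Ppoly L n = ∑ d ∈ (L.foldr Nat.gcd 0).divisors,
      Polynomial.X ^ (dimB L - dimB (L.map (· / d))) * Qpoly (L.map (· / d)) (n / d) := by
  rw [Ppoly, setOf_isRST_eq_biUnion hL.1 hn, finsum_mem_biUnion
    (fun d _ d' _ hne => Set.disjoint_left.mpr fun σ h h' => hne (h.2.symm.trans h'.2))
    (Finset.finite_toSet _) fun d _ => (finite_setOf_isTab L n).subset fun σ h => h.1.1,
    finsum_mem_coe_finset]
  refine Finset.sum_congr rfl fun d hd => ?_
  have hdL : ∀ x ∈ L, d ∣ x := dvd_foldr_gcd_iff.mp (Nat.dvd_of_mem_divisors hd)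
  obtain ⟨m, rfl⟩ : d ∣ n := hL.1 ▸ List.dvd_sum hdL
  rw [Nat.mul_div_cancel_left m (Nat.pos_of_mem_divisors hd)]
  exact finsum_maxDivisor_eq (Nat.pos_of_mem_divisors hd) (Nat.pos_of_mul_pos_left hn) hdL hL.2.1
end
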